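/- arXiv:1806.01009 — 8 statements merged into one kernel-verified Lean document; each statement's English description precedes it below -/
import Mathlib

section
/- Let X ∈ ℝ^{n×n} be the lower-triangular matrix of ones (the path matrix of the path graph rooted at vertex 1), let S ⊆ {2,…,n}, and let j ∉ {1} ∪ S. Define j⁻ = max{i < j : i ∈ {1} ∪ S} and j⁺ = min{i > j : i ∈ S ∪ {n+1}} with the convention X_{n+1} = 0. Then the squared distance of the column X_j from the span of the columns {X_i : i ∈ {1} ∪ S} equals (j⁺ - j)(j - j⁻)/(j⁺ - j⁻). -/
/-!
Row `r` of `X_{{1} ∪ S} θ` is the partial sum of `θ` over the indices `k ∈ {1} ∪ S` with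
`k ≤ r`. No such index lies strictly between `j⁻` and `j⁺`, so on the rows `j⁻ ≤ r < j⁺` this
partial sum is a single number `g`, and those rows alone contribute
`(j - j⁻) g² + (j⁺ - j) (1 - g)² ≥ (j⁺ - j)(j - j⁻)/(j⁺ - j⁻)` to the residual. Weights
`c = (j⁺ - j)/(j⁺ - j⁻)` on `X_{j⁻}` and `1 - c` on `X_{j⁺}` attain this bound and fit all other
rows exactly.
-/

open Finset

theorem isLeast_range_mul_sq_add_mul_one_sub_sq {A B : ℝ} (hA : 0 < A) (hB : 0 < B) :
    IsLeast (Set.range fun g => A * g ^ 2 + B * (1 - g) ^ 2) (A * B / (A + B)) := by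
  have hAB : 0 < A + B := add_pos hA hB
  refine ⟨⟨B / (A + B), ?_⟩, ?_⟩
  · field_simp
    ring
  · rintro _ ⟨g, rfl⟩
    rw [div_le_iff₀ hAB]
    nlinarith [sq_nonneg (A * g - B * (1 - g))]

theorem sum_Ico_sq_indicator_sub_of_eqOn {a j b : ℕ} (haj : a ≤ j) (hjb : j ≤ b)
    {F : ℕ → ℝ} {g : ℝ} (hF : ∀ r ∈ Ico a b, F r = g) :
    ∑ r ∈ Ico a b, ((if j ≤ r then 1 else 0) - F r) ^ 2
      = ((j : ℝ) - a) * g ^ 2 + ((b : ℝ) - j) * (1 - g) ^ 2 := by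
  rw [← sum_Ico_consecutive _ haj hjb]
  have below : ∀ r ∈ Ico a j, ((if j ≤ r then (1 : ℝ) else 0) - F r) ^ 2 = g ^ 2 := by
    intro r hr
    have hr' := mem_Ico.mp hr
    rw [if_neg (by omega), hF r (mem_Ico.mpr ⟨hr'.1, by omega⟩)]
    ring
  have above : ∀ r ∈ Ico j b, ((if j ≤ r then (1 : ℝ) else 0) - F r) ^ 2 = (1 - g) ^ 2 := by
    intro r hr
    have hr' := mem_Ico.mp hr
    rw [if_pos hr'.1, hF r (mem_Ico.mpr ⟨by omega, hr'.2⟩)]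
  rw [sum_congr rfl below, sum_congr rfl above, sum_const, sum_const, Nat.card_Ico,
    Nat.card_Ico, nsmul_eq_mul, nsmul_eq_mul, Nat.cast_sub haj, Nat.cast_sub hjb]

theorem sum_filter_le_eq_of_forall_le_or_le {M : Type*} [AddCommMonoid M] {T : Finset ℕ}
    {a b r : ℕ} (hT : ∀ k ∈ T, k ≤ a ∨ b ≤ k) (har : a ≤ r) (hrb : r < b) (θ : ℕ → M) :
    ∑ k ∈ T with k ≤ r, θ k = ∑ k ∈ T with k ≤ a, θ k := by
  refine sum_congr (filter_congr fun k hk => ?_) fun _ _ => rfl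
  rcases hT k hk with h | h <;> omega

theorem sum_sq_sub_sum_mul_eq_sum_Ico_sum_filter_le {n : ℕ} {col : ℕ → Fin n → ℝ}
    (hcol : ∀ k i, col k i = if k ≤ i.val + 1 then 1 else 0) (T : Finset ℕ) (j : ℕ)
    (θ : ℕ → ℝ) :
    ∑ i : Fin n, (col j i - ∑ k ∈ T, θ k * col k i) ^ 2
      = ∑ r ∈ Ico 1 (n + 1), ((if j ≤ r then 1 else 0) - ∑ k ∈ T with k ≤ r, θ k) ^ 2 := by
  simp only [hcol, mul_ite, mul_one, mul_zero, ← sum_filter]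
  rw [Fin.sum_univ_eq_sum_range (fun i => ((if j ≤ i + 1 then 1 else 0)
    - ∑ k ∈ T with k ≤ i + 1, θ k) ^ 2), sum_Ico_eq_sum_range]
  simp only [add_tsub_cancel_right, add_comm 1]

section LeastSquares

variable {n a j b : ℕ} {T : Finset ℕ}

theorem le_sum_Ico_sq_indicator_sub_sum_filter_le (ha : 1 ≤ a) (haj : a ≤ j) (hjb : j ≤ b)
    (hb : b ≤ n + 1) (hT : ∀ k ∈ T, k ≤ a ∨ b ≤ k) (θ : ℕ → ℝ) :
    ((j : ℝ) - a) * (∑ k ∈ T with k ≤ a, θ k) ^ 2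
        + ((b : ℝ) - j) * (1 - ∑ k ∈ T with k ≤ a, θ k) ^ 2
      ≤ ∑ r ∈ Ico 1 (n + 1), ((if j ≤ r then 1 else 0) - ∑ k ∈ T with k ≤ r, θ k) ^ 2 := by
  rw [← sum_Ico_sq_indicator_sub_of_eqOn haj hjb fun r hr =>
    sum_filter_le_eq_of_forall_le_or_le hT (mem_Ico.mp hr).1 (mem_Ico.mp hr).2 θ]
  exact sum_le_sum_of_subset_of_nonneg (Ico_subset_Ico ha hb) fun _ _ _ => sq_nonneg _

theorem sum_Ico_sq_indicator_sub_sum_filter_le_two_point (ha : 1 ≤ a) (haj : a ≤ j)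
    (hjb : j ≤ b) (hb : b ≤ n + 1) (haT : a ∈ T) (hbT : b ≤ n → b ∈ T) (c : ℝ) :
    ∑ r ∈ Ico 1 (n + 1), ((if j ≤ r then 1 else 0)
        - ∑ k ∈ T with k ≤ r, ((if k = a then c else 0) + (if k = b then 1 - c else 0))) ^ 2
      = ((j : ℝ) - a) * c ^ 2 + ((b : ℝ) - j) * (1 - c) ^ 2 := by
  have hfit : ∀ r ≤ n,
      ∑ k ∈ T with k ≤ r, ((if k = a then c else 0) + (if k = b then 1 - c else 0))
        = (if a ≤ r then c else 0) + (if b ≤ r then 1 - c else 0) := by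
    intro r hr
    by_cases hbr : b ≤ r
    · simp [sum_add_distrib, haT, hbT (hbr.trans hr), hbr]
    · simp [sum_add_distrib, haT, hbr]
  rw [← sum_subset (Ico_subset_Ico ha hb)]
  · refine sum_Ico_sq_indicator_sub_of_eqOn haj hjb fun r hr => ?_
    have hr' := mem_Ico.mp hr
    rw [hfit r (by omega), if_pos hr'.1, if_neg (by omega), add_zero]
  · intro r hr hr'
    rw [mem_Ico] at hr hr'
    rw [hfit r (by omega)]
    rcases Nat.lt_or_ge r a with h | h
    · rw [if_neg (by omega), if_neg (by omega), if_neg (by omega)]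
      ring
    · rw [if_pos (by omega), if_pos (by omega), if_pos (by omega)]
      ring

end LeastSquares

theorem stmt3_general (n : ℕ) (S : Finset ℕ) (hS : S ⊆ Finset.Icc 2 n)
    (j : ℕ) (hjS : j ∉ insert 1 S)
    (jm : ℕ) (hjm : jm ∈ insert 1 S) (hjml : jm < j)
    (hjmmax : ∀ i ∈ insert 1 S, i < j → i ≤ jm)
    (jp : ℕ) (hjp : jp ∈ insert (n+1) S) (hjpg : j < jp)
    (hjpmin : ∀ i ∈ insert (n+1) S, j < i → jp ≤ i)
    (col : ℕ → Fin n → ℝ)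
    (hcol : ∀ k i, col k i = if k ≤ i.val + 1 then 1 else 0) :
    IsLeast {v : ℝ | ∃ θ : ℕ → ℝ,
        v = ∑ i : Fin n, (col j i - ∑ k ∈ insert 1 S, θ k * col k i)^2}
      (((jp : ℝ) - j) * ((j : ℝ) - jm) / ((jp : ℝ) - jm)) := by
  have hS' : ∀ k ∈ S, 2 ≤ k ∧ k ≤ n := fun k hk => mem_Icc.mp (hS hk)
  have hjm1 : 1 ≤ jm := by grind
  have hjpn : jp ≤ n + 1 := by grind
  have hjpT : jp ≤ n → jp ∈ insert 1 S := by grind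
  have hgap : ∀ k ∈ insert 1 S, k ≤ jm ∨ jp ≤ k := by
    intro k hk
    rcases lt_trichotomy k j with h | rfl | h
    · exact .inl (hjmmax k hk h)
    · exact absurd hk hjS
    · exact .inr (hjpmin k (by grind) h)
  obtain ⟨⟨c, hc⟩, hmin⟩ := isLeast_range_mul_sq_add_mul_one_sub_sq
    (sub_pos.mpr (by exact_mod_cast hjml : (jm : ℝ) < j))
    (sub_pos.mpr (by exact_mod_cast hjpg : (j : ℝ) < jp))
  rw [show ((jp : ℝ) - j) * ((j : ℝ) - jm) / ((jp : ℝ) - jm)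
      = ((j : ℝ) - jm) * ((jp : ℝ) - j) / (((j : ℝ) - jm) + ((jp : ℝ) - j)) by ring]
  refine ⟨⟨fun k => (if k = jm then c else 0) + (if k = jp then 1 - c else 0), ?_⟩, ?_⟩
  · rw [sum_sq_sub_sum_mul_eq_sum_Ico_sum_filter_le hcol, ← hc,
      sum_Ico_sq_indicator_sub_sum_filter_le_two_point hjm1 hjml.le hjpg.le hjpn hjm hjpT]
  · rintro _ ⟨θ, rfl⟩
    rw [sum_sq_sub_sum_mul_eq_sum_Ico_sum_filter_le hcol]
    exact (hmin ⟨_, rfl⟩).trans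
      (le_sum_Ico_sq_indicator_sub_sum_filter_le hjm1 hjml.le hjpg.le hjpn hgap θ)

/-- Localizing projections on the path graph: the squared distance of column `X_j`
(of the lower-triangular matrix of ones) from the span of the columns indexed by
`{1} ∪ S` equals `(j⁺ - j)(j - j⁻)/(j⁺ - j⁻)`, where `j⁻` and `j⁺` are the nearest
indices in `{1} ∪ S` below `j` and in `S ∪ {n+1}` above `j`. -/
theorem stmt3 (n : ℕ) (S : Finset ℕ) (hS : S ⊆ Finset.Icc 2 n)
    (j : ℕ) (hj1 : 1 ≤ j) (hjn : j ≤ n) (hjS : j ∉ insert 1 S)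
    (jm : ℕ) (hjm : jm ∈ insert 1 S) (hjml : jm < j)
    (hjmmax : ∀ i ∈ insert 1 S, i < j → i ≤ jm)
    (jp : ℕ) (hjp : jp ∈ insert (n+1) S) (hjpg : j < jp)
    (hjpmin : ∀ i ∈ insert (n+1) S, j < i → jp ≤ i)
    (col : ℕ → Fin n → ℝ)
    (hcol : ∀ k i, col k i = if k ≤ i.val + 1 then 1 else 0) :
    IsLeast {v : ℝ | ∃ θ : ℕ → ℝ,
        v = ∑ i : Fin n, (col j i - ∑ k ∈ insert 1 S, θ k * col k i)^2}
      (((jp : ℝ) - j) * ((j : ℝ) - jm) / ((jp : ℝ) - jm)) :=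
  stmt3_general n S hS j hjS jm hjm hjml hjmmax jp hjp hjpg hjpmin col hcol
end

section
/- Let X ∈ ℝ^{n×n} be the lower-triangular matrix of ones, S ⊆ {2,…,n}, and j ∉ {1} ∪ S with j < max(S). Define j⁻ and j⁺ as the nearest elements of {1} ∪ S below and above j respectively. The orthogonal projection of the column X_j onto the span of {X_i : i ∈ {1} ∪ S} equals ((j⁺ - j)/(j⁺ - j⁻))·X_{j⁻} + ((j - j⁻)/(j⁺ - j⁻))·X_{j⁺}; in particular the projection coefficients are supported on {j⁻, j⁺} and sum to 1. -/
/-!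
The Gram entries of the columns are `⟨X_p, X_q⟩ = n + 1 - max p q`. For `k ≤ j⁻` they are
`n + 1 - p` for `p ∈ {j⁻, j, j⁺}`, an affine function of `p`, which linear interpolation between
`j⁻` and `j⁺` reproduces at `j`. For `k ≥ j⁺` all three entries equal `n + 1 - k`, and the
residual vanishes because the interpolation weights sum to `1`.
-/

section Interpolation

variable {K : Type*} [Field K] {x₀ x x₁ : K}

theorem interpolation_weights_add (h : x₀ ≠ x₁) :
    (x₁ - x) / (x₁ - x₀) + (x - x₀) / (x₁ - x₀) = 1 := by
  rw [← add_div, div_eq_one_iff_eq (sub_ne_zero.mpr h.symm)]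
  ring

theorem interpolation_weights_mul_add (h : x₀ ≠ x₁) :
    (x₁ - x) / (x₁ - x₀) * x₀ + (x - x₀) / (x₁ - x₀) * x₁ = x := by
  field_simp [sub_ne_zero.mpr h.symm]
  ring

end Interpolation

/-- The column `X_k` of the `n × n` lower-triangular matrix of ones; `i : Fin n` stands for
row `i + 1`. -/
def onesFrom (n k : ℕ) : Fin n → ℝ := fun i => if k ≤ i.val + 1 then 1 else 0

theorem onesFrom_mul_onesFrom (n p q : ℕ) (i : Fin n) :
    onesFrom n p i * onesFrom n q i = onesFrom n (max p q) i := by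
  simp only [onesFrom, ite_zero_mul_ite_zero, mul_one, max_le_iff]

theorem sum_onesFrom {n m : ℕ} (h₁ : 1 ≤ m) (h₂ : m ≤ n + 1) :
    ∑ i, onesFrom n m i = (n : ℝ) + 1 - m := by
  have hfilter : {i ∈ Finset.range n | m ≤ i + 1} = Finset.Ico (m - 1) n := by
    ext i
    simp only [Finset.mem_filter, Finset.mem_range, Finset.mem_Ico]
    omega
  unfold onesFrom
  rw [Fin.sum_univ_eq_sum_range (fun i => if m ≤ i + 1 then (1 : ℝ) else 0),
    Finset.sum_boole, hfilter, Nat.card_Ico, Nat.cast_sub (by omega), Nat.cast_sub h₁]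
  ring

theorem stmt4_general (n : ℕ) (S : Finset ℕ) (hS : S ⊆ Finset.Icc 2 n)
    (j : ℕ) (hjS : j ∉ insert 1 S)
    (jm jp : ℕ)
    (hjm : jm ∈ insert 1 S) (hjml : jm < j)
    (hjmmax : ∀ i ∈ insert 1 S, i < j → i ≤ jm)
    (hjp : jp ∈ S) (hjpg : j < jp) (hjpmin : ∀ i ∈ S, j < i → jp ≤ i)
    (col : ℕ → Fin n → ℝ)
    (hcol : ∀ k i, col k i = if k ≤ i.val + 1 then 1 else 0) :
    (∀ k ∈ insert 1 S, ∑ i : Fin n,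
        (col j i - (((jp : ℝ) - j) / ((jp : ℝ) - jm) * col jm i
          + ((j : ℝ) - jm) / ((jp : ℝ) - jm) * col jp i)) * col k i = 0) ∧
    ((jp : ℝ) - j) / ((jp : ℝ) - jm) + ((j : ℝ) - jm) / ((jp : ℝ) - jm) = 1 := by
  obtain rfl : col = onesFrom n := funext₂ hcol
  have hjm_ne_jp : (jm : ℝ) ≠ jp := by exact_mod_cast (hjml.trans hjpg).ne
  have hweights := interpolation_weights_add (x := (j : ℝ)) hjm_ne_jp
  refine ⟨fun k hk => ?_, hweights⟩
  simp only [sub_mul, add_mul, mul_assoc, onesFrom_mul_onesFrom, Finset.sum_sub_distrib,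
    Finset.sum_add_distrib, ← Finset.mul_sum]
  have hjm_pos : 1 ≤ jm := by
    rcases Finset.mem_insert.mp hjm with rfl | h
    · rfl
    · exact (Finset.mem_Icc.mp (hS h)).1.trans' (by norm_num)
  have hjp_le : jp ≤ n := (Finset.mem_Icc.mp (hS hjp)).2
  rcases lt_or_gt_of_ne (ne_of_mem_of_not_mem hk hjS) with hkj | hjk
  · have hkjm := hjmmax k hk hkj
    rw [max_eq_left (by omega), max_eq_left hkjm, max_eq_left (by omega),
      sum_onesFrom (by omega) (by omega), sum_onesFrom hjm_pos (by omega),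
      sum_onesFrom (by omega) (by omega)]
    linear_combination
      interpolation_weights_mul_add (x := (j : ℝ)) hjm_ne_jp - ((n : ℝ) + 1) * hweights
  · have hjpk : jp ≤ k := hjpmin k ((Finset.mem_insert.mp hk).resolve_left (by omega)) hjk
    rw [max_eq_right (by omega), max_eq_right (by omega), max_eq_right hjpk]
    linear_combination -(∑ i, onesFrom n k i) * hweights

/-- For `j ∉ {1} ∪ S` with `j < max S`, the orthogonal projection of the column `X_j`
onto the span of the columns indexed by `{1} ∪ S` is
`((j⁺-j)/(j⁺-j⁻))·X_{j⁻} + ((j-j⁻)/(j⁺-j⁻))·X_{j⁺}`: the residual is orthogonal to all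
columns indexed by `{1} ∪ S`, and the coefficients sum to 1. -/
theorem stmt4 (n : ℕ) (S : Finset ℕ) (hS : S ⊆ Finset.Icc 2 n) (hSne : S.Nonempty)
    (j : ℕ) (hj1 : 1 ≤ j) (hjn : j ≤ n) (hjS : j ∉ insert 1 S)
    (hjmax : j < S.max' hSne)
    (jm jp : ℕ)
    (hjm : jm ∈ insert 1 S) (hjml : jm < j)
    (hjmmax : ∀ i ∈ insert 1 S, i < j → i ≤ jm)
    (hjp : jp ∈ S) (hjpg : j < jp) (hjpmin : ∀ i ∈ S, j < i → jp ≤ i)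
    (col : ℕ → Fin n → ℝ)
    (hcol : ∀ k i, col k i = if k ≤ i.val + 1 then 1 else 0) :
    (∀ k ∈ insert 1 S, ∑ i : Fin n,
        (col j i - (((jp : ℝ) - j) / ((jp : ℝ) - jm) * col jm i
          + ((j : ℝ) - jm) / ((jp : ℝ) - jm) * col jp i)) * col k i = 0) ∧
    ((jp : ℝ) - j) / ((jp : ℝ) - jm) + ((j : ℝ) - jm) / ((jp : ℝ) - jm) = 1 :=
  stmt4_general n S hS j hjS jm jp hjm hjml hjmmax hjp hjpg hjpmin col hcol
end

section
/- Let X ∈ ℝ^{n×n} be the lower-triangular matrix of ones, let S = {t_1 < … < t_s} ⊆ {2,…,n}, and define d_1 = t_1 - 1, d_j = t_j - t_{j-1} for 2 ≤ j ≤ s, and d_{s+1} = n - t_s + 1. Suppose d_1, d_{s+1} ≥ 2 and d_j ≥ 4 for 2 ≤ j ≤ s, and let u_j be integers with 2 ≤ u_j ≤ d_j - 2. Define the compatibility constant κ²(S) = min{(s+1)·‖Xβ‖₂²/n : β ∈ ℝ^n, ‖β_S‖₁ - ‖β_{-(({1}∪S))}‖₁ = 1}. Then κ²(S) ≥ ((s+1)/n)·(1/K)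 with K = 1/d_1 + Σ_{j=2}^s (1/u_j + 1/(d_j - u_j)) + 1/d_{s+1}. -/
/-!
Write `f i = ∑ k ≤ i, β k = (Xβ)_i`, so that each jump is `β (t j) = f (t j) - f (t j - 1)`.
Cut `{1, …, n}` into consecutive windows, the `j`-th one containing `t j - 1` and `t j`, and split
it between these two points into halves of lengths `d j - u j` and `u (j + 1)` (`d 1` and
`d (s + 1)` at the two ends). On a half of length `c`, `|f p|` is at most the mean of `|f|` over
the half plus the `ℓ¹` mass of `β` inside it away from the jump. These masses are disjoint pieces
of `β_{-({1} ∪ S)}`, so the constraint gives `1 ≤ ∑ (1 / c) ∑ |f|` over all halves. By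
Cauchy–Schwarz and AM–GM with weight `K`, each term is at most `1 / (2 K c) + (K / 2) ∑ f²`;
summing, `1 ≤ 1 / 2 + (K / 2) ‖Xβ‖₂²`.
-/

open Finset

noncomputable def cumSum (β : ℕ → ℝ) (i : ℕ) : ℝ := ∑ k ∈ Icc 1 i, β k

lemma cumSum_sub_cumSum (β : ℕ → ℝ) {p q : ℕ} (h : p ≤ q) :
    cumSum β q - cumSum β p = ∑ k ∈ Ioc p q, β k := by
  rw [cumSum, cumSum, ← zero_add 1, Icc_add_one_left_eq_Ioc, Icc_add_one_left_eq_Ioc,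
    ← sum_Ioc_consecutive β (Nat.zero_le p) h, add_sub_cancel_left]

lemma abs_cumSum_sub_le {β : ℕ → ℝ} {a b p q : ℕ} (hp : p ∈ Ioc a b) (hq : q ∈ Ioc a b) :
    |cumSum β p - cumSum β q| ≤ ∑ i ∈ Ioc (a + 1) b, |β i| := by
  wlog hqp : q ≤ p generalizing p q
  · rw [abs_sub_comm]
    exact this hq hp (le_of_not_ge hqp)
  rw [mem_Ioc] at hp hq
  rw [cumSum_sub_cumSum β hqp]
  exact (abs_sum_le_sum_abs _ _).trans
    (sum_le_sum_of_subset_of_nonneg (Ioc_subset_Ioc (by omega) hp.2) fun _ _ _ => abs_nonneg _)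

lemma abs_cumSum_le_average_add {β : ℕ → ℝ} {a b p : ℕ} (hp : p ∈ Ioc a b) :
    |cumSum β p| ≤ (∑ q ∈ Ioc a b, |cumSum β q|) / #(Ioc a b) + ∑ i ∈ Ioc (a + 1) b, |β i| := by
  have hcard : (0 : ℝ) < #(Ioc a b) := by exact_mod_cast card_pos.2 ⟨p, hp⟩
  have h := sum_le_sum fun q hq => (abs_sub_abs_le_abs_sub (cumSum β p) (cumSum β q)).trans
    (abs_cumSum_sub_le (β := β) hp hq)
  rw [sum_sub_distrib, sum_const, sum_const, nsmul_eq_mul, nsmul_eq_mul] at h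
  rw [div_add' _ _ _ hcard.ne', le_div_iff₀ hcard]
  linarith

lemma sum_abs_div_card_le {ι : Type*} {s : Finset ι} (hs : s.Nonempty) (g : ι → ℝ) {K : ℝ}
    (hK : 0 < K) :
    (∑ i ∈ s, |g i|) / #s ≤ 1 / #s / (2 * K) + K / 2 * ∑ i ∈ s, g i ^ 2 := by
  have hc : (0 : ℝ) < #s := by exact_mod_cast hs.card_pos
  have hCS : (∑ i ∈ s, |g i|) ^ 2 ≤ #s * ∑ i ∈ s, g i ^ 2 := by
    simpa only [sq_abs] using sq_sum_le_card_mul_sum_sq (s := s) (f := fun i => |g i|)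
  have hAMGM : 2 * K * ∑ i ∈ s, |g i| ≤ 1 + K ^ 2 * (#s * ∑ i ∈ s, g i ^ 2) := by
    nlinarith [sq_nonneg (K * ∑ i ∈ s, |g i| - 1)]
  rw [← sub_nonneg]
  have : 1 / #s / (2 * K) + K / 2 * ∑ i ∈ s, g i ^ 2 - (∑ i ∈ s, |g i|) / #s
      = (1 + K ^ 2 * (#s * ∑ i ∈ s, g i ^ 2) - 2 * K * ∑ i ∈ s, |g i|) / (2 * K * #s) := by
    field_simp
  rw [this]
  exact div_nonneg (by linarith) (by positivity)

lemma sum_sum_le_sum_of_pairwiseDisjoint {ι α M : Type*} [DecidableEq α] [AddCommMonoid M]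
    [PartialOrder M] [IsOrderedAddMonoid M] {J : Finset ι} {A : ι → Finset α} {B : Finset α}
    {g : α → M} (hA : (J : Set ι).PairwiseDisjoint A) (hAB : ∀ j ∈ J, A j ⊆ B)
    (hg : ∀ i ∈ B, 0 ≤ g i) :
    ∑ j ∈ J, ∑ i ∈ A j, g i ≤ ∑ i ∈ B, g i := by
  rw [← sum_biUnion hA]
  exact sum_le_sum_of_subset_of_nonneg (biUnion_subset.2 hAB) fun i hi _ => hg i hi

lemma Monotone.pairwiseDisjoint_Ioc_sub_one {m : ℕ → ℕ} (hm : Monotone m) (J : Set ℕ) :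
    J.PairwiseDisjoint fun j => Ioc (m (j - 1)) (m j) := fun i _ j _ hij => by
  rw [Function.onFun, ← disjoint_coe, coe_Ioc, coe_Ioc]
  simpa using hm.pairwise_disjoint_on_Ioc_pred hij

lemma abs_le_window_bound (β : ℕ → ℝ) {K : ℝ} (hK : 0 < K) {L t R : ℕ} (hLt : L + 1 < t)
    (htR : t ≤ R) :
    |β t| ≤ (1 / #(Ioc L (t - 1)) + 1 / #(Ioc (t - 1) R)) / (2 * K)
      + K / 2 * ∑ q ∈ Ioc L R, cumSum β q ^ 2 + ∑ i ∈ (Ioc (L + 1) R).erase t, |β i| := by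
  obtain ⟨p, rfl⟩ : ∃ p, t = p + 1 := ⟨t - 1, by omega⟩
  rw [Nat.add_sub_cancel]
  have hleft := abs_cumSum_le_average_add (β := β) (mem_Ioc.2 ⟨(by omega : L < p), le_rfl⟩)
  have hright := abs_cumSum_le_average_add (β := β) (mem_Ioc.2 ⟨(by omega : p < p + 1), htR⟩)
  have hleft' := sum_abs_div_card_le (nonempty_Ioc.2 (by omega : L < p)) (cumSum β) hK
  have hright' := sum_abs_div_card_le (nonempty_Ioc.2 (by omega : p < R)) (cumSum β) hK
  have hsq := sum_Ioc_consecutive (fun q => cumSum β q ^ 2) (by omega : L ≤ p) (by omega : p ≤ R)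
  have hinc : ∑ i ∈ Ioc (L + 1) p, |β i| + ∑ i ∈ Ioc (p + 1) R, |β i|
      = ∑ i ∈ (Ioc (L + 1) R).erase (p + 1), |β i| := by
    rw [sum_erase_eq_sub (mem_Ioc.2 ⟨by omega, htR⟩),
      ← sum_Ioc_consecutive _ (by omega : L + 1 ≤ p) (by omega : p ≤ R),
      ← sum_Ioc_consecutive _ p.le_succ htR, Nat.Ioc_succ_singleton, sum_singleton]
    ring
  have hjump : |β (p + 1)| ≤ |cumSum β (p + 1)| + |cumSum β p| := by
    rw [← sum_singleton β (p + 1), ← Nat.Ioc_succ_singleton, ← cumSum_sub_cumSum β p.le_succ]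
    exact abs_sub _ _
  rw [← hsq, ← hinc, mul_add, add_div]
  linarith

theorem one_div_le_sum_sq_cumSum {ι : Type*} (β : ℕ → ℝ) (n : ℕ) (J : Finset ι)
    (t L R : ι → ℕ)
    (hwin : ∀ j ∈ J, L j + 1 < t j ∧ t j ≤ R j ∧ R j ≤ n)
    (hdisj : (J : Set ι).PairwiseDisjoint fun j => Ioc (L j) (R j))
    (hβ : 1 ≤ ∑ j ∈ J, |β (t j)| - ∑ i ∈ Icc 2 n \ J.image t, |β i|) :
    1 / ∑ j ∈ J, (1 / #(Ioc (L j) (t j - 1)) + 1 / #(Ioc (t j - 1) (R j)) : ℝ)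
      ≤ ∑ i ∈ Icc 1 n, cumSum β i ^ 2 := by
  set K := ∑ j ∈ J, (1 / #(Ioc (L j) (t j - 1)) + 1 / #(Ioc (t j - 1) (R j)) : ℝ)
  set V := ∑ i ∈ Icc 1 n, cumSum β i ^ 2
  have hK0 : 0 ≤ K := sum_nonneg fun j _ => by positivity
  rcases hK0.eq_or_lt with hK | hK
  · rw [← hK, div_zero]
    exact sum_nonneg fun _ _ => sq_nonneg _
  have hinc : ∑ j ∈ J, ∑ i ∈ (Ioc (L j + 1) (R j)).erase (t j), |β i|
      ≤ ∑ i ∈ Icc 2 n \ J.image t, |β i| := by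
    refine sum_sum_le_sum_of_pairwiseDisjoint
      (hdisj.mono fun j => (erase_subset _ _).trans (Ioc_subset_Ioc_left (L j).le_succ))
      (fun j hj i hi => ?_) fun _ _ => abs_nonneg _
    obtain ⟨hit, hi⟩ := mem_erase.1 hi
    rw [mem_Ioc] at hi
    refine mem_sdiff.2 ⟨mem_Icc.2 ⟨by omega, hi.2.trans (hwin j hj).2.2⟩, fun h => ?_⟩
    obtain ⟨j', hj', rfl⟩ := mem_image.1 h
    obtain rfl : j' = j := by
      by_contra hne
      exact disjoint_left.1 (hdisj hj' hj hne)
        (mem_Ioc.2 ⟨by linarith [(hwin j' hj').1], (hwin j' hj').2.1⟩)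
        (mem_Ioc.2 ⟨by omega, hi.2⟩)
    exact hit rfl
  have hsq : ∑ j ∈ J, ∑ q ∈ Ioc (L j) (R j), cumSum β q ^ 2 ≤ V :=
    sum_sum_le_sum_of_pairwiseDisjoint hdisj
      (fun j hj i hi => mem_Icc.2 ⟨by grind, by grind⟩) fun _ _ => sq_nonneg _
  have htotal := sum_le_sum fun j hj => abs_le_window_bound β hK (hwin j hj).1 (hwin j hj).2.1
  rw [sum_add_distrib, sum_add_distrib, ← sum_div, ← mul_sum, div_mul_cancel_right₀ hK.ne']
    at htotal
  rw [div_le_iff₀ hK]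
  linarith [mul_le_mul_of_nonneg_left hsq (by positivity : 0 ≤ K / 2)]

/-- The `j`-th window is `Ioc (windowEnd n s t u (j - 1)) (windowEnd n s t u j)`. -/
def windowEnd (n s : ℕ) (t u : ℕ → ℕ) (j : ℕ) : ℕ :=
  if j = 0 then 0 else if j < s then t j + u (j + 1) - 1 else n

section windowEnd

variable {n s : ℕ} {t u : ℕ → ℕ}

lemma windowEnd_zero : windowEnd n s t u 0 = 0 := if_pos rfl

lemma windowEnd_of_lt {j : ℕ} (h0 : j ≠ 0) (hjs : j < s) :
    windowEnd n s t u j = t j + u (j + 1) - 1 := by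
  rw [windowEnd, if_neg h0, if_pos hjs]

lemma windowEnd_of_le {j : ℕ} (h0 : j ≠ 0) (hsj : s ≤ j) : windowEnd n s t u j = n := by
  rw [windowEnd, if_neg h0, if_neg (not_lt.2 hsj)]

lemma monotone_windowEnd (hgap : ∀ j ∈ Icc 2 s, t (j - 1) + u j < t j) (hts : t s ≤ n) :
    Monotone (windowEnd n s t u) := by
  refine monotone_nat_of_le_succ fun j => ?_
  rcases j.eq_zero_or_pos with rfl | hj0
  · rw [windowEnd_zero]
    exact Nat.zero_le _
  rcases lt_trichotomy (j + 1) s with hjs | rfl | hjs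
  · have h := hgap (j + 1) (mem_Icc.2 ⟨by omega, hjs.le⟩)
    rw [Nat.add_sub_cancel] at h
    rw [windowEnd_of_lt hj0.ne' (by omega), windowEnd_of_lt (by omega) hjs]
    omega
  · have h := hgap (j + 1) (mem_Icc.2 ⟨by omega, le_rfl⟩)
    rw [Nat.add_sub_cancel] at h
    rw [windowEnd_of_lt hj0.ne' (by omega), windowEnd_of_le (by omega) le_rfl]
    omega
  · rw [windowEnd_of_le hj0.ne' (by omega), windowEnd_of_le (by omega) (by omega)]

lemma windowEnd_bounds (hgap : ∀ j ∈ Icc 2 s, t (j - 1) + u j < t j)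
    (hu : ∀ j ∈ Icc 2 s, 1 ≤ u j) (ht1 : 1 < t 1) (hts : t s ≤ n) :
    ∀ j ∈ Icc 1 s, windowEnd n s t u (j - 1) + 1 < t j ∧ t j ≤ windowEnd n s t u j
      ∧ windowEnd n s t u j ≤ n := by
  intro j hj
  obtain ⟨h1j, hjs⟩ := mem_Icc.1 hj
  refine ⟨?_, ?_, (monotone_windowEnd hgap hts hjs).trans (windowEnd_of_le (by omega) le_rfl).le⟩
  · rcases h1j.eq_or_lt with rfl | h1j
    · rwa [windowEnd_zero]
    · have h := hgap j (mem_Icc.2 ⟨h1j, hjs⟩)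
      have hu' := hu j (mem_Icc.2 ⟨h1j, hjs⟩)
      rw [windowEnd_of_lt (by omega) (by omega), Nat.sub_add_cancel (by omega : 1 ≤ j)]
      omega
  · rcases hjs.eq_or_lt with rfl | hjs
    · rwa [windowEnd_of_le (by omega) le_rfl]
    · have h := hu (j + 1) (mem_Icc.2 ⟨by omega, hjs⟩)
      rw [windowEnd_of_lt (by omega) hjs]
      omega

lemma sum_inv_card_windowEnd (d : ℕ → ℕ) (hs : 1 ≤ s)
    (hgap : ∀ j ∈ Icc 2 s, t (j - 1) + u j < t j) (ht : ∀ j ∈ Icc 1 s, t j ∈ Icc 1 n)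
    (hd1 : d 1 = t 1 - 1) (hdj : ∀ j ∈ Icc 2 s, d j = t j - t (j - 1))
    (hds : d (s + 1) = n - t s + 1) :
    ∑ j ∈ Icc 1 s, (1 / #(Ioc (windowEnd n s t u (j - 1)) (t j - 1))
        + 1 / #(Ioc (t j - 1) (windowEnd n s t u j)) : ℝ)
      = 1 / (d 1 : ℝ) + (∑ j ∈ Icc 2 s, (1 / (u j : ℝ) + 1 / ((d j : ℝ) - (u j : ℝ))))
        + 1 / (d (s + 1) : ℝ) := by
  have hleft : ∑ j ∈ Icc 1 s, (1 / #(Ioc (windowEnd n s t u (j - 1)) (t j - 1)) : ℝ)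
      = 1 / (d 1 : ℝ) + ∑ j ∈ Icc 2 s, 1 / ((d j : ℝ) - (u j : ℝ)) := by
    rw [Icc_eq_cons_Ioc hs, sum_cons,
      show Ioc 1 s = Icc 2 s from (Icc_add_one_left_eq_Ioc 1 s).symm, Nat.sub_self, windowEnd_zero,
      Nat.card_Ioc, Nat.sub_zero, hd1]
    congr 1
    refine sum_congr rfl fun j hj => ?_
    have h := hgap j hj
    have hd := hdj j hj
    rw [mem_Icc] at hj
    have ht' := mem_Icc.1 (ht (j - 1) (mem_Icc.2 ⟨by omega, by omega⟩))
    rw [windowEnd_of_lt (by omega) (by omega), Nat.sub_add_cancel (by omega), Nat.card_Ioc,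
      show t j - 1 - (t (j - 1) + u j - 1) = d j - u j by omega, Nat.cast_sub (by omega)]
  have hright : ∑ j ∈ Icc 1 s, (1 / #(Ioc (t j - 1) (windowEnd n s t u j)) : ℝ)
      = ∑ j ∈ Icc 2 s, 1 / (u j : ℝ) + 1 / (d (s + 1) : ℝ) := by
    obtain ⟨r, rfl⟩ : ∃ r, s = r + 1 := ⟨s - 1, by omega⟩
    obtain ⟨hts1, htsn⟩ := mem_Icc.1 (ht (r + 1) (mem_Icc.2 ⟨hs, le_rfl⟩))
    rw [sum_Icc_succ_top (by omega), ← map_add_right_Icc 1 r 1, sum_map,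
      windowEnd_of_le (by omega) le_rfl, Nat.card_Ioc, hds,
      show n - (t (r + 1) - 1) = n - t (r + 1) + 1 by omega]
    congr 1
    refine sum_congr rfl fun j hj => ?_
    have h := mem_Icc.1 (ht j (mem_Icc.2 ⟨(mem_Icc.1 hj).1, by grind⟩))
    rw [mem_Icc] at hj
    rw [windowEnd_of_lt (by omega) (by omega), Nat.card_Ioc, addRightEmbedding_apply,
      show t j + u (j + 1) - 1 - (t j - 1) = u (j + 1) by omega]
  rw [sum_add_distrib, hleft, hright, sum_add_distrib]
  ring

end windowEnd

theorem stmt9_general (n s : ℕ) (hs : 1 ≤ s)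
    (t : ℕ → ℕ)
    (htmem : ∀ j, 1 ≤ j → j ≤ s → 2 ≤ t j ∧ t j ≤ n)
    (d u : ℕ → ℕ)
    (hd1 : d 1 = t 1 - 1)
    (hdj : ∀ j, 2 ≤ j → j ≤ s → d j = t j - t (j-1))
    (hds : d (s+1) = n - t s + 1)
    (hu : ∀ j, 2 ≤ j → j ≤ s → 2 ≤ u j ∧ u j ≤ d j - 2)
    (β : ℕ → ℝ)
    (hconstr : ∑ j ∈ Finset.Icc 1 s, |β (t j)|
        - ∑ i ∈ Finset.Icc 2 n \ (Finset.Icc 1 s).image t, |β i| = 1) :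
    ((s : ℝ) + 1) / n *
        (1 / (1 / (d 1 : ℝ)
          + (∑ j ∈ Finset.Icc 2 s, (1 / (u j : ℝ) + 1 / ((d j : ℝ) - (u j : ℝ))))
          + 1 / (d (s+1) : ℝ)))
      ≤ ((s : ℝ) + 1) * (∑ i ∈ Finset.Icc 1 n, (∑ k ∈ Finset.Icc 1 i, β k)^2) / n := by
  have htIcc : ∀ j ∈ Icc 1 s, t j ∈ Icc 1 n := fun j hj => by
    have := htmem j (mem_Icc.1 hj).1 (mem_Icc.1 hj).2
    exact mem_Icc.2 ⟨by omega, this.2⟩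
  have hdj' : ∀ j ∈ Icc 2 s, d j = t j - t (j - 1) := fun j hj =>
    hdj j (mem_Icc.1 hj).1 (mem_Icc.1 hj).2
  have hu' : ∀ j ∈ Icc 2 s, 2 ≤ u j ∧ u j ≤ d j - 2 := fun j hj =>
    hu j (mem_Icc.1 hj).1 (mem_Icc.1 hj).2
  have hgap : ∀ j ∈ Icc 2 s, t (j - 1) + u j < t j := fun j hj => by
    have := hdj' j hj
    have := hu' j hj
    omega
  have hts : t s ≤ n := (htmem s hs le_rfl).2
  have key := one_div_le_sum_sq_cumSum β n (Icc 1 s) t (fun j => windowEnd n s t u (j - 1))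
    (windowEnd n s t u)
    (windowEnd_bounds hgap (fun j hj => one_le_two.trans (hu' j hj).1) (htmem 1 le_rfl hs).1 hts)
    ((monotone_windowEnd hgap hts).pairwiseDisjoint_Ioc_sub_one _) hconstr.ge
  rw [sum_inv_card_windowEnd d hs hgap htIcc hd1 hdj' hds] at key
  rw [mul_div_right_comm]
  exact mul_le_mul_of_nonneg_left key (by positivity)

/-- Lower bound on the compatibility constant for the path graph: for every `β`
satisfying the compatibility constraint `‖β_S‖₁ - ‖β_{-({1}∪S)}‖₁ = 1`, one has
`(s+1)·‖Xβ‖₂²/n ≥ ((s+1)/n)·(1/K)`, where `X` is the lower-triangular matrix of ones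
(so `(Xβ)_i = Σ_{k ≤ i} β_k`) and
`K = 1/d₁ + Σ_{j=2}^s (1/u_j + 1/(d_j - u_j)) + 1/d_{s+1}`. -/
theorem stmt9 (n s : ℕ) (hs : 1 ≤ s)
    (t : ℕ → ℕ)
    (ht : ∀ j, 2 ≤ j → j ≤ s → t (j-1) < t j)
    (htmem : ∀ j, 1 ≤ j → j ≤ s → 2 ≤ t j ∧ t j ≤ n)
    (d u : ℕ → ℕ)
    (hd1 : d 1 = t 1 - 1)
    (hdj : ∀ j, 2 ≤ j → j ≤ s → d j = t j - t (j-1))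
    (hds : d (s+1) = n - t s + 1)
    (hd1b : 2 ≤ d 1) (hdsb : 2 ≤ d (s+1))
    (hdjb : ∀ j, 2 ≤ j → j ≤ s → 4 ≤ d j)
    (hu : ∀ j, 2 ≤ j → j ≤ s → 2 ≤ u j ∧ u j ≤ d j - 2)
    (β : ℕ → ℝ)
    (hconstr : ∑ j ∈ Finset.Icc 1 s, |β (t j)|
        - ∑ i ∈ Finset.Icc 2 n \ (Finset.Icc 1 s).image t, |β i| = 1) :
    ((s : ℝ) + 1) / n *
        (1 / (1 / (d 1 : ℝ)
          + (∑ j ∈ Finset.Icc 2 s, (1 / (u j : ℝ) + 1 / ((d j : ℝ) - (u j : ℝ))))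
          + 1 / (d (s+1) : ℝ)))
      ≤ ((s : ℝ) + 1) * (∑ i ∈ Finset.Icc 1 n, (∑ k ∈ Finset.Icc 1 i, β k)^2) / n :=
  stmt9_general n s hs t htmem d u hd1 hdj hds hu β hconstr
end

section
/- In the setting of the compatibility constant lower bound for the path graph, if additionally d_j is even for all 2 ≤ j ≤ s and one takes u_j = d_j/2, then the bound is attained: κ²(S) = ((s+1)/n)·(1/K) with K = 1/d_1 + Σ_{j=2}^s 4/d_j + 1/d_{s+1}. Equality is realized by the piecewise-constant function f* which equals -n/d_1 on the first d_1 coordinates, alternates sign with value (-1)^j · 2n/d_j on the j-th block of length d_j for 2 ≤ j ≤ s, and equals (-1)^{s+1}·n/d_{s+1} on the last d_{s+1} coordinates. -/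
/-!
Let `F` be the partial sums of an admissible `β`. In every block pick a point `p j` where `F ^ 2`
is at most its block average. A jump of `β` at `t j` lies between `p j` and `p (j + 1)`, so it is
paid for either by `F (p (j + 1)) - F (p j)` or by jumps of `β` off `S`; the constraint therefore
forces `1 ≤ ∑ |F (p (j + 1)) - F (p j)| ≤ ∑ w j * |F (p j)|` with weights `w = 1, 2, …, 2, 1`.
Cauchy–Schwarz against `d j * F (p j) ^ 2 ≤ ∑_{block j} F ^ 2` gives `1 ≤ K * ∑ F ^ 2`.
The profile `f*` makes every step an equality: `β*` only jumps on `S`, consecutive block values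
have opposite signs, and on block `j` it is proportional to `w j / d j`, the equality case of
Cauchy–Schwarz.
-/

open Finset

lemma sum_Icc_one_eq {M : Type*} [AddCommMonoid M] (g : ℕ → M) {s : ℕ} (hs : 1 ≤ s) :
    ∑ j ∈ Icc 1 s, g j = g 1 + ∑ j ∈ Icc 2 s, g j := by
  rw [← add_sum_Ioc_eq_sum_Icc hs, ← Icc_add_one_left_eq_Ioc]
  rfl

lemma sum_Icc_one_succ_eq {M : Type*} [AddCommMonoid M] (g : ℕ → M) {s : ℕ} (hs : 1 ≤ s) :
    ∑ j ∈ Icc 1 (s + 1), g j = g 1 + ∑ j ∈ Icc 2 s, g j + g (s + 1) := by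
  rw [sum_Icc_succ_top (by omega), sum_Icc_one_eq g hs]

lemma sum_sum_Ioc_consecutive {M : Type*} [AddCommMonoid M] (g : ℕ → M) {q : ℕ → ℕ} {m : ℕ}
    (hq : MonotoneOn q (Icc 1 (m + 1))) :
    ∑ j ∈ Icc 1 m, ∑ i ∈ Ioc (q j) (q (j + 1)), g i = ∑ i ∈ Ioc (q 1) (q (m + 1)), g i := by
  induction m with
  | zero => simp
  | succ m ih =>
    have hmem : ∀ {j}, 1 ≤ j → j ≤ m + 2 → j ∈ Icc 1 (m + 2) := fun h1 h2 => mem_Icc.2 ⟨h1, h2⟩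
    rw [sum_Icc_succ_top (by omega), ih (hq.mono (Icc_subset_Icc_right (by omega))),
      sum_Ioc_consecutive _ (hq (hmem le_rfl (by omega)) (hmem (by omega) (by omega)) (by omega))
        (hq (hmem (by omega) (by omega)) (hmem (by omega) le_rfl) (by omega))]

lemma sq_sum_mul_le_sum_sq_div_mul_sum_mul_sq {ι : Type*} (u : Finset ι) (w x : ι → ℝ)
    {c : ι → ℝ} (hc : ∀ i ∈ u, 0 < c i) :
    (∑ i ∈ u, w i * x i) ^ 2 ≤ (∑ i ∈ u, w i ^ 2 / c i) * ∑ i ∈ u, c i * x i ^ 2 :=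
  sum_sq_le_sum_mul_sum_of_sq_le_mul u
    (fun i hi => div_nonneg (sq_nonneg _) (hc i hi).le)
    (fun i hi => mul_nonneg (hc i hi).le (sq_nonneg _))
    (fun i hi => le_of_eq (by field_simp [(hc i hi).ne']))

lemma abs_neg_one_pow_succ_mul_sub {x y : ℝ} (hx : 0 ≤ x) (hy : 0 ≤ y) (j : ℕ) :
    |(-1) ^ (j + 1) * y - (-1) ^ j * x| = x + y := by
  rw [pow_succ, show (-1) ^ j * -1 * y - (-1) ^ j * x = -((-1) ^ j * (x + y)) by ring, abs_neg,
    abs_mul, abs_pow, abs_neg, abs_one, one_pow, one_mul, abs_of_nonneg (add_nonneg hx hy)]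

def blockWeight (s j : ℕ) : ℝ := if j = 1 ∨ j = s + 1 then 1 else 2

lemma blockWeight_pos (s j : ℕ) : 0 < blockWeight s j := by
  unfold blockWeight; split_ifs <;> norm_num

lemma blockWeight_of_mem_Icc {s j : ℕ} (hj : j ∈ Icc 2 s) : blockWeight s j = 2 := by
  rw [mem_Icc] at hj
  exact if_neg (by omega)

lemma sum_blockWeight_mul (g : ℕ → ℝ) {s : ℕ} (hs : 1 ≤ s) :
    ∑ j ∈ Icc 1 (s + 1), blockWeight s j * g j = g 1 + 2 * ∑ j ∈ Icc 2 s, g j + g (s + 1) := by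
  rw [sum_Icc_one_succ_eq _ hs, mul_sum, sum_congr rfl fun j hj => by
    rw [blockWeight_of_mem_Icc hj]]
  simp [blockWeight]

lemma sum_add_succ_eq_sum_blockWeight_mul (g : ℕ → ℝ) {s : ℕ} (hs : 1 ≤ s) :
    ∑ j ∈ Icc 1 s, (g j + g (j + 1)) = ∑ j ∈ Icc 1 (s + 1), blockWeight s j * g j := by
  have hshift : ∑ j ∈ Icc 1 s, g (j + 1) = ∑ j ∈ Icc 1 (s + 1), g j - g 1 := by
    rw [← sum_Ioc_add_eq_sum_Icc (by omega : 1 ≤ s + 1), ← Icc_add_one_left_eq_Ioc,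
      ← Finset.map_add_right_Icc, sum_map]
    simp
  rw [sum_add_distrib, hshift, sum_blockWeight_mul _ hs, sum_Icc_one_succ_eq _ hs,
    sum_Icc_one_eq _ hs]
  ring

lemma sum_blockWeight_sq_div {s : ℕ} (hs : 1 ≤ s) (d : ℕ → ℕ) :
    ∑ j ∈ Icc 1 (s + 1), blockWeight s j ^ 2 / (d j : ℝ) =
      1 / (d 1 : ℝ) + ∑ j ∈ Icc 2 s, 4 / (d j : ℝ) + 1 / (d (s + 1) : ℝ) := by
  rw [sum_Icc_one_succ_eq _ hs, sum_congr rfl fun j hj => by rw [blockWeight_of_mem_Icc hj]]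
  norm_num [blockWeight]

noncomputable def alternatingProfile (n s : ℕ) (d : ℕ → ℕ) (j : ℕ) : ℝ :=
  (-1) ^ j * blockWeight s j * n / d j

lemma sum_abs_sub_alternatingProfile {s : ℕ} (hs : 1 ≤ s) (n : ℕ) (d : ℕ → ℕ) :
    ∑ j ∈ Icc 1 s, |alternatingProfile n s d (j + 1) - alternatingProfile n s d j| =
      n * ∑ j ∈ Icc 1 (s + 1), blockWeight s j ^ 2 / (d j : ℝ) := by
  have hx : ∀ j, 0 ≤ (n : ℝ) * (blockWeight s j / d j) := fun j =>
    mul_nonneg n.cast_nonneg (div_nonneg (blockWeight_pos s j).le (d j).cast_nonneg)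
  have hprofile : ∀ j, alternatingProfile n s d j = (-1) ^ j * (n * (blockWeight s j / d j)) :=
    fun j => by rw [alternatingProfile]; ring
  simp_rw [hprofile, abs_neg_one_pow_succ_mul_sub (hx _) (hx _),
    sum_add_succ_eq_sum_blockWeight_mul _ hs, mul_sum]
  exact sum_congr rfl fun j _ => by ring

section PartialSums

variable (β : ℕ → ℝ)

lemma abs_sum_Icc_sub_sum_Icc_le {a b : ℕ} (hab : a ≤ b) :
    |∑ k ∈ Icc 1 b, β k - ∑ k ∈ Icc 1 a, β k| ≤ ∑ i ∈ Ioc a b, |β i| := by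
  have hIcc : ∀ m, Icc 1 m = Ioc 0 m := fun _ => rfl
  rw [hIcc, hIcc, ← sum_Ioc_consecutive β (Nat.zero_le a) hab, add_sub_cancel_left]
  exact abs_sum_le_sum_abs _ _

lemma two_mul_abs_le_abs_sub_add_sum_abs {p a q : ℕ} (hpa : p ≤ a) (haq : a < q) :
    2 * |β (a + 1)| ≤
      |∑ k ∈ Icc 1 q, β k - ∑ k ∈ Icc 1 p, β k| + ∑ i ∈ Ioc p q, |β i| := by
  set F : ℕ → ℝ := fun i => ∑ k ∈ Icc 1 i, β k
  have hjump : β (a + 1) = (F q - F p) - (F q - F (a + 1)) - (F a - F p) := by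
    simp only [F, sum_Icc_succ_top (by omega : 1 ≤ a + 1)]
    ring
  have hsplit : ∑ i ∈ Ioc p q, |β i| =
      ∑ i ∈ Ioc p a, |β i| + |β (a + 1)| + ∑ i ∈ Ioc (a + 1) q, |β i| := by
    rw [← sum_Ioc_consecutive _ (by omega : p ≤ a + 1) haq,
      ← sum_Ioc_consecutive _ hpa (by omega : a ≤ a + 1), Nat.Ioc_succ_singleton, sum_singleton]
  have hright := abs_sum_Icc_sub_sum_Icc_le β (by omega : a + 1 ≤ q)
  have hleft := abs_sum_Icc_sub_sum_Icc_le β hpa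
  have htri : |β (a + 1)| ≤ |F q - F p| + |F q - F (a + 1)| + |F a - F p| := by
    rw [hjump]
    linarith [abs_sub (F q - F p - (F q - F (a + 1))) (F a - F p),
      abs_sub (F q - F p) (F q - F (a + 1))]
  linarith

lemma sum_Icc_eq_of_sub {β f : ℕ → ℝ} (h1 : β 1 = f 1)
    (hsub : ∀ i, 2 ≤ i → β i = f i - f (i - 1)) {i : ℕ} (hi : 1 ≤ i) :
    ∑ k ∈ Icc 1 i, β k = f i := by
  induction i, hi using Nat.le_induction with
  | base => simpa using h1
  | succ i hi ih => rw [sum_Icc_succ_top (by omega), ih, hsub (i + 1) (by omega),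
      Nat.add_sub_cancel, add_sub_cancel]

end PartialSums

/-- Block `j` (for `1 ≤ j ≤ s + 1`) is `Ioc (T (j - 1)) (T j)`, of length `d j`; the jump `t j`
is the first point of block `j + 1`. -/
structure IsBlockPartition (n s : ℕ) (d T t : ℕ → ℕ) : Prop where
  T_eq : ∀ j, T j = ∑ k ∈ Icc 1 j, d k
  d_pos : ∀ j ∈ Icc 1 (s + 1), 0 < d j
  T_last : T (s + 1) = n
  t_eq : ∀ j ∈ Icc 1 s, t j = T j + 1

namespace IsBlockPartition

variable {n s : ℕ} {d T t : ℕ → ℕ}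

lemma T_zero (h : IsBlockPartition n s d T t) : T 0 = 0 := by
  simp [h.T_eq]

lemma T_succ (h : IsBlockPartition n s d T t) (j : ℕ) : T (j + 1) = T j + d (j + 1) := by
  rw [h.T_eq, h.T_eq, sum_Icc_succ_top (by omega)]

lemma monotone (h : IsBlockPartition n s d T t) : Monotone T :=
  monotone_nat_of_le_succ fun j => by rw [h.T_succ]; omega

lemma T_sub_one_add (h : IsBlockPartition n s d T t) {j : ℕ} (hj : 1 ≤ j) :
    T j = T (j - 1) + d j := by
  obtain ⟨k, rfl⟩ := Nat.exists_eq_add_of_le' hj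
  exact h.T_succ k

lemma T_lt_T (h : IsBlockPartition n s d T t) {j k : ℕ} (hjk : j < k) (hk : k ≤ s + 1) :
    T j < T k := by
  have := h.T_sub_one_add (j := k) (by omega)
  have := h.d_pos k (mem_Icc.2 ⟨by omega, hk⟩)
  have := h.monotone (Nat.le_sub_one_of_lt hjk)
  omega

lemma card_block (h : IsBlockPartition n s d T t) {j : ℕ} (hj : 1 ≤ j) :
    #(Ioc (T (j - 1)) (T j)) = d j := by
  rw [Nat.card_Ioc, h.T_sub_one_add hj]
  omega

lemma sum_blocks {M : Type*} [AddCommMonoid M] (h : IsBlockPartition n s d T t) (g : ℕ → M) :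
    ∑ j ∈ Icc 1 (s + 1), ∑ i ∈ Ioc (T (j - 1)) (T j), g i = ∑ i ∈ Icc 1 n, g i := by
  have := sum_sum_Ioc_consecutive g (q := fun j => T (j - 1)) (m := s + 1)
    (fun _ _ _ _ hab => h.monotone (Nat.sub_le_sub_right hab 1))
  simp only [Nat.add_sub_cancel, Nat.sub_self, h.T_zero, h.T_last] at this
  exact this

lemma exists_mem_block (h : IsBlockPartition n s d T t) {i : ℕ} (hi : i ∈ Icc 1 n) :
    ∃ j ∈ Icc 1 (s + 1), i ∈ Ioc (T (j - 1)) (T j) := by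
  rw [mem_Icc] at hi
  have hex : ∃ k, i ≤ T k := ⟨s + 1, h.T_last ▸ hi.2⟩
  have hspec := Nat.find_spec hex
  have hpos : 1 ≤ Nat.find hex := Nat.one_le_iff_ne_zero.2 fun h0 => by
    have := h0 ▸ hspec
    rw [h.T_zero] at this
    omega
  refine ⟨Nat.find hex, mem_Icc.2 ⟨hpos, Nat.find_min' hex (h.T_last ▸ hi.2)⟩,
    mem_Ioc.2 ⟨?_, hspec⟩⟩
  exact not_le.1 (Nat.find_min hex (by omega))

lemma t_mem_Icc (h : IsBlockPartition n s d T t) {j : ℕ} (hj : j ∈ Icc 1 s) : t j ∈ Icc 2 n := by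
  have h0 := h.T_lt_T (j := 0) (k := j) (mem_Icc.1 hj).1 (by linarith [(mem_Icc.1 hj).2])
  have hn := h.T_lt_T (j := j) (k := s + 1) (by linarith [(mem_Icc.1 hj).2]) le_rfl
  rw [h.T_zero] at h0
  rw [h.T_last] at hn
  rw [h.t_eq j hj, mem_Icc]
  omega

lemma injOn_t (h : IsBlockPartition n s d T t) : Set.InjOn t (Icc 1 s) := by
  intro j hj k hk hjk
  simp only [coe_Icc, Set.mem_Icc] at hj hk
  rw [h.t_eq j (mem_Icc.2 hj), h.t_eq k (mem_Icc.2 hk)] at hjk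
  by_contra hne
  rcases Nat.lt_or_gt_of_ne hne with hlt | hlt
  · have := h.T_lt_T hlt (by omega); omega
  · have := h.T_lt_T hlt (by omega); omega

lemma exists_forall_card_mul_le_sum (h : IsBlockPartition n s d T t) (g : ℕ → ℝ) :
    ∃ p : ℕ → ℕ, ∀ j ∈ Icc 1 (s + 1),
      p j ∈ Ioc (T (j - 1)) (T j) ∧ d j * g (p j) ≤ ∑ i ∈ Ioc (T (j - 1)) (T j), g i := by
  have hmin : ∀ j ∈ Icc 1 (s + 1), ∃ i ∈ Ioc (T (j - 1)) (T j),
      d j * g i ≤ ∑ i ∈ Ioc (T (j - 1)) (T j), g i := by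
    intro j hj
    have hcard := h.card_block (mem_Icc.1 hj).1
    have hne : (Ioc (T (j - 1)) (T j)).Nonempty :=
      card_pos.1 (hcard ▸ h.d_pos j hj)
    obtain ⟨i, hi, hle⟩ := exists_min_image _ g hne
    refine ⟨i, hi, ?_⟩
    simpa [hcard] using card_nsmul_le_sum _ g (g i) hle
  choose! p hp using hmin
  exact ⟨p, hp⟩

lemma sum_abs_sub_sum_abs_le (h : IsBlockPartition n s d T t) (β : ℕ → ℝ) {p : ℕ → ℕ}
    (hp : ∀ j ∈ Icc 1 (s + 1), p j ∈ Ioc (T (j - 1)) (T j)) :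
    ∑ j ∈ Icc 1 s, |β (t j)| - ∑ i ∈ Icc 2 n \ (Icc 1 s).image t, |β i| ≤
      ∑ j ∈ Icc 1 s, |∑ k ∈ Icc 1 (p (j + 1)), β k - ∑ k ∈ Icc 1 (p j), β k| := by
  have hpj : ∀ {j}, 1 ≤ j → j ≤ s + 1 → T (j - 1) < p j ∧ p j ≤ T j :=
    fun h1 h2 => mem_Ioc.1 (hp _ (mem_Icc.2 ⟨h1, h2⟩))
  have hpmono : MonotoneOn p (Icc 1 (s + 1)) := by
    intro j hj k hk hjk
    rw [coe_Icc, Set.mem_Icc] at hj hk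
    rcases hjk.eq_or_lt with rfl | hlt
    · rfl
    have := h.monotone (Nat.le_sub_one_of_lt hlt)
    have := hpj hj.1 hj.2
    have := hpj hk.1 hk.2
    omega
  have hjumps : 2 * ∑ j ∈ Icc 1 s, |β (t j)| ≤
      ∑ j ∈ Icc 1 s, |∑ k ∈ Icc 1 (p (j + 1)), β k - ∑ k ∈ Icc 1 (p j), β k| +
        ∑ i ∈ Ioc (p 1) (p (s + 1)), |β i| := by
    rw [mul_sum, ← sum_sum_Ioc_consecutive _ hpmono, ← sum_add_distrib]
    refine sum_le_sum fun j hj => ?_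
    have hj' := mem_Icc.1 hj
    have := hpj hj'.1 (by omega)
    have := hpj (j := j + 1) (by omega) (by omega)
    rw [h.t_eq j hj, Nat.add_sub_cancel] at *
    exact two_mul_abs_le_abs_sub_add_sum_abs β (by omega) (by omega)
  have hsub : ∑ i ∈ Ioc (p 1) (p (s + 1)), |β i| ≤ ∑ i ∈ Icc 2 n, |β i| := by
    refine sum_le_sum_of_subset_of_nonneg (fun i hi => ?_) fun _ _ _ => abs_nonneg _
    have hfirst := hpj le_rfl (by omega)
    have hlast := hpj le_add_self le_rfl
    rw [Nat.sub_self, h.T_zero] at hfirst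
    rw [h.T_last] at hlast
    rw [mem_Ioc] at hi
    rw [mem_Icc]
    omega
  have hsdiff : ∑ i ∈ Icc 2 n \ (Icc 1 s).image t, |β i| =
      ∑ i ∈ Icc 2 n, |β i| - ∑ j ∈ Icc 1 s, |β (t j)| := by
    rw [sum_sdiff_eq_sub (fun i hi => ?_), sum_image h.injOn_t]
    obtain ⟨j, hj, rfl⟩ := mem_image.1 hi
    exact h.t_mem_Icc hj
  linarith

lemma one_le_mul_sum_sq (h : IsBlockPartition n s d T t) (hs : 1 ≤ s) (β : ℕ → ℝ)
    (hβ : ∑ j ∈ Icc 1 s, |β (t j)| - ∑ i ∈ Icc 2 n \ (Icc 1 s).image t, |β i| = 1) :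
    1 ≤ (∑ j ∈ Icc 1 (s + 1), blockWeight s j ^ 2 / d j) *
      ∑ i ∈ Icc 1 n, (∑ k ∈ Icc 1 i, β k) ^ 2 := by
  set F : ℕ → ℝ := fun i => ∑ k ∈ Icc 1 i, β k
  obtain ⟨p, hp⟩ := h.exists_forall_card_mul_le_sum fun i => F i ^ 2
  have hweighted : 1 ≤ ∑ j ∈ Icc 1 (s + 1), blockWeight s j * |F (p j)| :=
    calc 1 ≤ ∑ j ∈ Icc 1 s, |F (p (j + 1)) - F (p j)| :=
          hβ.symm.le.trans (h.sum_abs_sub_sum_abs_le β fun j hj => (hp j hj).1)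
      _ ≤ ∑ j ∈ Icc 1 s, (|F (p j)| + |F (p (j + 1))|) :=
          sum_le_sum fun j _ => (abs_sub _ _).trans_eq (add_comm _ _)
      _ = _ := sum_add_succ_eq_sum_blockWeight_mul _ hs
  calc 1 ≤ (∑ j ∈ Icc 1 (s + 1), blockWeight s j * |F (p j)|) ^ 2 := by nlinarith
    _ ≤ (∑ j ∈ Icc 1 (s + 1), blockWeight s j ^ 2 / d j) *
          ∑ j ∈ Icc 1 (s + 1), d j * |F (p j)| ^ 2 :=
        sq_sum_mul_le_sum_sq_div_mul_sum_mul_sq _ _ _ fun j hj => Nat.cast_pos.2 (h.d_pos j hj)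
    _ ≤ (∑ j ∈ Icc 1 (s + 1), blockWeight s j ^ 2 / d j) *
          ∑ j ∈ Icc 1 (s + 1), ∑ i ∈ Ioc (T (j - 1)) (T j), F i ^ 2 := by
        gcongr with j hj
        rw [sq_abs]
        exact (hp j hj).2
    _ = _ := by rw [h.sum_blocks]

section BlockConstant

variable {f a : ℕ → ℝ}

lemma sum_sq_eq_of_eq_on_blocks (h : IsBlockPartition n s d T t)
    (hf : ∀ j ∈ Icc 1 (s + 1), ∀ i ∈ Ioc (T (j - 1)) (T j), f i = a j) :
    ∑ i ∈ Icc 1 n, f i ^ 2 = ∑ j ∈ Icc 1 (s + 1), d j * a j ^ 2 := by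
  rw [← h.sum_blocks]
  refine sum_congr rfl fun j hj => ?_
  rw [sum_congr rfl fun i hi => by rw [hf j hj i hi], sum_const, h.card_block (mem_Icc.1 hj).1,
    nsmul_eq_mul]

lemma sub_eq_zero_of_eq_on_blocks (h : IsBlockPartition n s d T t)
    (hf : ∀ j ∈ Icc 1 (s + 1), ∀ i ∈ Ioc (T (j - 1)) (T j), f i = a j) {i : ℕ}
    (hi : i ∈ Icc 2 n \ (Icc 1 s).image t) : f i - f (i - 1) = 0 := by
  rw [mem_sdiff, mem_Icc, mem_image] at hi
  obtain ⟨⟨hi2, hin⟩, hjump⟩ := hi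
  obtain ⟨j, hj, hij⟩ := h.exists_mem_block (mem_Icc.2 ⟨by omega, hin⟩)
  have hj' := mem_Icc.1 hj
  rw [mem_Ioc] at hij
  have hstart : i ≠ T (j - 1) + 1 := by
    rintro rfl
    rcases Nat.lt_or_ge j 2 with hj1 | hj2
    · rw [show j - 1 = 0 by omega, h.T_zero] at hi2
      omega
    · exact hjump ⟨j - 1, mem_Icc.2 ⟨by omega, by omega⟩, h.t_eq _ (mem_Icc.2 ⟨by omega, by omega⟩)⟩
  rw [hf j hj i (mem_Ioc.2 hij), hf j hj (i - 1) (mem_Ioc.2 ⟨by omega, by omega⟩), sub_self]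

lemma sub_eq_of_eq_on_blocks (h : IsBlockPartition n s d T t)
    (hf : ∀ j ∈ Icc 1 (s + 1), ∀ i ∈ Ioc (T (j - 1)) (T j), f i = a j) {j : ℕ}
    (hj : j ∈ Icc 1 s) : f (t j) - f (t j - 1) = a (j + 1) - a j := by
  have hj' := mem_Icc.1 hj
  have hd := h.d_pos (j + 1) (mem_Icc.2 ⟨by omega, by omega⟩)
  have hT := h.T_succ j
  have hprev := h.T_lt_T (j := j - 1) (k := j) (by omega) (by omega)
  rw [h.t_eq j hj, Nat.add_sub_cancel,
    hf (j + 1) (mem_Icc.2 ⟨by omega, by omega⟩) _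
      (mem_Ioc.2 ⟨by rw [Nat.add_sub_cancel]; omega, by omega⟩),
    hf j (mem_Icc.2 ⟨by omega, by omega⟩) _ (mem_Ioc.2 ⟨hprev, le_rfl⟩)]

end BlockConstant

lemma sum_blockWeight_sq_div_pos (h : IsBlockPartition n s d T t) :
    0 < ∑ j ∈ Icc 1 (s + 1), blockWeight s j ^ 2 / (d j : ℝ) :=
  sum_pos (fun j hj => div_pos (pow_pos (blockWeight_pos s j) 2) (Nat.cast_pos.2 (h.d_pos j hj)))
    (nonempty_Icc.2 (by omega))

lemma n_pos (h : IsBlockPartition n s d T t) : 0 < n :=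
  h.T_last ▸ h.T_zero ▸ h.T_lt_T (Nat.succ_pos s) le_rfl

lemma sum_card_mul_sq_alternatingProfile (h : IsBlockPartition n s d T t) :
    ∑ j ∈ Icc 1 (s + 1), d j * alternatingProfile n s d j ^ 2 =
      n ^ 2 * ∑ j ∈ Icc 1 (s + 1), blockWeight s j ^ 2 / (d j : ℝ) := by
  rw [mul_sum]
  refine sum_congr rfl fun j hj => ?_
  have hd : (d j : ℝ) ≠ 0 := (Nat.cast_pos.2 (h.d_pos j hj)).ne'
  have hsign : ((-1 : ℝ) ^ j) ^ 2 = 1 := by rw [← pow_mul, mul_comm, pow_mul, neg_one_sq, one_pow]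
  rw [alternatingProfile, div_pow, mul_pow, mul_pow, hsign]
  field_simp

lemma exists_mul_attains (h : IsBlockPartition n s d T t) (hs : 1 ≤ s) {fstar βstar : ℕ → ℝ}
    (hf : ∀ j ∈ Icc 1 (s + 1), ∀ i ∈ Ioc (T (j - 1)) (T j), fstar i = alternatingProfile n s d j)
    (hβ1 : βstar 1 = fstar 1) (hβi : ∀ i, 2 ≤ i → βstar i = fstar i - fstar (i - 1)) :
    ∃ c : ℝ, c ≠ 0 ∧
      (∑ j ∈ Icc 1 s, |c * βstar (t j)| - ∑ i ∈ Icc 2 n \ (Icc 1 s).image t, |c * βstar i| = 1) ∧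
      ((s : ℝ) + 1) * (∑ i ∈ Icc 1 n, (∑ k ∈ Icc 1 i, c * βstar k) ^ 2) / n =
        ((s : ℝ) + 1) / n * (1 / ∑ j ∈ Icc 1 (s + 1), blockWeight s j ^ 2 / (d j : ℝ)) := by
  set K := ∑ j ∈ Icc 1 (s + 1), blockWeight s j ^ 2 / (d j : ℝ)
  have hK : 0 < K := h.sum_blockWeight_sq_div_pos
  have hn : (0 : ℝ) < n := Nat.cast_pos.2 h.n_pos
  have hjumps : ∑ j ∈ Icc 1 s, |βstar (t j)| = n * K := by
    rw [← sum_abs_sub_alternatingProfile hs n d]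
    refine sum_congr rfl fun j hj => ?_
    rw [hβi _ (mem_Icc.1 (h.t_mem_Icc hj)).1, h.sub_eq_of_eq_on_blocks hf hj]
  have hoff : ∀ i ∈ Icc 2 n \ (Icc 1 s).image t, βstar i = 0 := fun i hi =>
    (hβi i (mem_Icc.1 (mem_sdiff.1 hi).1).1).trans (h.sub_eq_zero_of_eq_on_blocks hf hi)
  have hsq : ∑ i ∈ Icc 1 n, (∑ k ∈ Icc 1 i, βstar k) ^ 2 = n ^ 2 * K := by
    rw [sum_congr rfl fun i hi => by rw [sum_Icc_eq_of_sub hβ1 hβi (mem_Icc.1 hi).1],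
      h.sum_sq_eq_of_eq_on_blocks hf, h.sum_card_mul_sq_alternatingProfile]
  refine ⟨1 / (n * K), by positivity, ?_, ?_⟩
  · rw [sum_eq_zero (s := Icc 2 n \ (Icc 1 s).image t) fun i hi => by
      rw [hoff i hi, mul_zero, abs_zero]]
    simp_rw [abs_mul, ← mul_sum, hjumps, abs_of_pos (by positivity : 0 < 1 / (n * K)), sub_zero]
    field_simp
  · simp_rw [← mul_sum, mul_pow, ← mul_sum, hsq]
    field_simp

lemma le_of_sum_abs_sub_sum_abs_eq_one (h : IsBlockPartition n s d T t) (hs : 1 ≤ s)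
    (β : ℕ → ℝ)
    (hβ : ∑ j ∈ Icc 1 s, |β (t j)| - ∑ i ∈ Icc 2 n \ (Icc 1 s).image t, |β i| = 1) :
    ((s : ℝ) + 1) / n * (1 / ∑ j ∈ Icc 1 (s + 1), blockWeight s j ^ 2 / (d j : ℝ)) ≤
      ((s : ℝ) + 1) * (∑ i ∈ Icc 1 n, (∑ k ∈ Icc 1 i, β k) ^ 2) / n := by
  have hK := h.sum_blockWeight_sq_div_pos
  have hn : (0 : ℝ) < n := Nat.cast_pos.2 h.n_pos
  calc ((s : ℝ) + 1) / n * (1 / ∑ j ∈ Icc 1 (s + 1), blockWeight s j ^ 2 / (d j : ℝ))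
      = ((s : ℝ) + 1) * (1 / ∑ j ∈ Icc 1 (s + 1), blockWeight s j ^ 2 / (d j : ℝ)) / n := by ring
    _ ≤ _ := by
      gcongr
      rw [div_le_iff₀ hK, mul_comm]
      exact h.one_le_mul_sum_sq hs β hβ

end IsBlockPartition

lemma isBlockPartition_of_jumps {n s : ℕ} {d T t : ℕ → ℕ} (hs : 1 ≤ s)
    (ht : ∀ j, 2 ≤ j → j ≤ s → t (j - 1) < t j)
    (htmem : ∀ j, 1 ≤ j → j ≤ s → 2 ≤ t j ∧ t j ≤ n)
    (hd1 : d 1 = t 1 - 1) (hdj : ∀ j, 2 ≤ j → j ≤ s → d j = t j - t (j - 1))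
    (hds : d (s + 1) = n - t s + 1) (hT : ∀ j, T j = ∑ k ∈ Icc 1 j, d k) :
    IsBlockPartition n s d T t := by
  have hTsucc : ∀ j, T (j + 1) = T j + d (j + 1) := fun j => by
    rw [hT, hT, sum_Icc_succ_top (by omega)]
  have ht_eq : ∀ j, 1 ≤ j → j ≤ s → t j = T j + 1 := by
    intro j hj
    induction j, hj using Nat.le_induction with
    | base =>
      have := htmem 1 le_rfl hs
      rw [hT, Icc_self, sum_singleton]
      omega
    | succ j hj ih =>
      intro hjs
      have := ht (j + 1) (by omega) hjs
      have := hdj (j + 1) (by omega) hjs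
      have := ih (by omega)
      rw [Nat.add_sub_cancel] at *
      rw [hTsucc]
      omega
  have hts := ht_eq s hs le_rfl
  have htsn := htmem s hs le_rfl
  refine ⟨hT, fun j hj => ?_, by rw [hTsucc]; omega,
    fun j hj => ht_eq j (mem_Icc.1 hj).1 (mem_Icc.1 hj).2⟩
  rw [mem_Icc] at hj
  rcases Nat.lt_or_ge j 2 with hj1 | hj2
  · have := htmem 1 le_rfl hs
    rw [show j = 1 by omega, hd1]
    omega
  rcases Nat.lt_or_ge j (s + 1) with hjs | hjs
  · have := ht j hj2 (by omega)
    rw [hdj j hj2 (by omega)]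
    omega
  · rw [show j = s + 1 by omega, hds]
    omega

theorem stmt10_general (n s : ℕ) (hs : 1 ≤ s)
    (t : ℕ → ℕ)
    (ht : ∀ j, 2 ≤ j → j ≤ s → t (j-1) < t j)
    (htmem : ∀ j, 1 ≤ j → j ≤ s → 2 ≤ t j ∧ t j ≤ n)
    (d : ℕ → ℕ)
    (hd1 : d 1 = t 1 - 1)
    (hdj : ∀ j, 2 ≤ j → j ≤ s → d j = t j - t (j-1))
    (hds : d (s+1) = n - t s + 1)
    (T : ℕ → ℕ) (hT : ∀ j, T j = ∑ k ∈ Finset.Icc 1 j, d k)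
    (fstar : ℕ → ℝ)
    (hfstar : ∀ j, 1 ≤ j → j ≤ s+1 → ∀ i, T (j-1) < i → i ≤ T j →
      fstar i = (-1 : ℝ)^j * (if j = 1 ∨ j = s+1 then 1 else 2) * n / d j)
    (βstar : ℕ → ℝ)
    (hβ1 : βstar 1 = fstar 1)
    (hβi : ∀ i, 2 ≤ i → βstar i = fstar i - fstar (i-1)) :
    IsLeast {v : ℝ | ∃ β : ℕ → ℝ,
        (∑ j ∈ Finset.Icc 1 s, |β (t j)|
          - ∑ i ∈ Finset.Icc 2 n \ (Finset.Icc 1 s).image t, |β i| = 1) ∧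
        v = ((s : ℝ) + 1) * (∑ i ∈ Finset.Icc 1 n, (∑ k ∈ Finset.Icc 1 i, β k)^2) / n}
      (((s : ℝ) + 1) / n *
        (1 / (1 / (d 1 : ℝ) + (∑ j ∈ Finset.Icc 2 s, 4 / (d j : ℝ)) + 1 / (d (s+1) : ℝ)))) ∧
    ∃ c : ℝ, c ≠ 0 ∧
      (∑ j ∈ Finset.Icc 1 s, |c * βstar (t j)|
        - ∑ i ∈ Finset.Icc 2 n \ (Finset.Icc 1 s).image t, |c * βstar i| = 1) ∧
      ((s : ℝ) + 1) * (∑ i ∈ Finset.Icc 1 n, (∑ k ∈ Finset.Icc 1 i, c * βstar k)^2) / n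
        = ((s : ℝ) + 1) / n *
          (1 / (1 / (d 1 : ℝ) + (∑ j ∈ Finset.Icc 2 s, 4 / (d j : ℝ)) + 1 / (d (s+1) : ℝ))) := by
  have hB : IsBlockPartition n s d T t := isBlockPartition_of_jumps hs ht htmem hd1 hdj hds hT
  rw [← sum_blockWeight_sq_div hs d]
  obtain ⟨c, hc, hcompat, hvalue⟩ := hB.exists_mul_attains hs (fun j hj i hi =>
    hfstar j (mem_Icc.1 hj).1 (mem_Icc.1 hj).2 i (mem_Ioc.1 hi).1 (mem_Ioc.1 hi).2) hβ1 hβi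
  refine ⟨⟨⟨_, hcompat, hvalue.symm⟩, ?_⟩, c, hc, hcompat, hvalue⟩
  rintro v ⟨β, hβ, rfl⟩
  exact hB.le_of_sum_abs_sub_sum_abs_eq_one hs β hβ

/-- Tightness of the lower bound on the compatibility constant of the path graph when
all interior block lengths `d_j` are even and `u_j = d_j/2`: the compatibility constant
`κ²(S)` equals `((s+1)/n)·(1/K)` with `K = 1/d₁ + Σ_{j=2}^s 4/d_j + 1/d_{s+1}`, and the
minimum is realized by (a scalar multiple of) the vector `β*` of jumps of the
piecewise-constant function `f*` with value `(-1)^j·2n/d_j` on the `j`-th block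
(factor `1` instead of `2` on the extreme blocks). -/
theorem stmt10 (n s : ℕ) (hs : 1 ≤ s)
    (t : ℕ → ℕ)
    (ht : ∀ j, 2 ≤ j → j ≤ s → t (j-1) < t j)
    (htmem : ∀ j, 1 ≤ j → j ≤ s → 2 ≤ t j ∧ t j ≤ n)
    (d : ℕ → ℕ)
    (hd1 : d 1 = t 1 - 1)
    (hdj : ∀ j, 2 ≤ j → j ≤ s → d j = t j - t (j-1))
    (hds : d (s+1) = n - t s + 1)
    (hd1b : 2 ≤ d 1) (hdsb : 2 ≤ d (s+1))
    (hdjb : ∀ j, 2 ≤ j → j ≤ s → 4 ≤ d j)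
    (heven : ∀ j, 2 ≤ j → j ≤ s → d j % 2 = 0)
    (T : ℕ → ℕ) (hT : ∀ j, T j = ∑ k ∈ Finset.Icc 1 j, d k)
    (fstar : ℕ → ℝ)
    (hfstar : ∀ j, 1 ≤ j → j ≤ s+1 → ∀ i, T (j-1) < i → i ≤ T j →
      fstar i = (-1 : ℝ)^j * (if j = 1 ∨ j = s+1 then 1 else 2) * n / d j)
    (βstar : ℕ → ℝ)
    (hβ1 : βstar 1 = fstar 1)
    (hβi : ∀ i, 2 ≤ i → βstar i = fstar i - fstar (i-1)) :
    IsLeast {v : ℝ | ∃ β : ℕ → ℝ,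
        (∑ j ∈ Finset.Icc 1 s, |β (t j)|
          - ∑ i ∈ Finset.Icc 2 n \ (Finset.Icc 1 s).image t, |β i| = 1) ∧
        v = ((s : ℝ) + 1) * (∑ i ∈ Finset.Icc 1 n, (∑ k ∈ Finset.Icc 1 i, β k)^2) / n}
      (((s : ℝ) + 1) / n *
        (1 / (1 / (d 1 : ℝ) + (∑ j ∈ Finset.Icc 2 s, 4 / (d j : ℝ)) + 1 / (d (s+1) : ℝ)))) ∧
    ∃ c : ℝ, c ≠ 0 ∧
      (∑ j ∈ Finset.Icc 1 s, |c * βstar (t j)|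
        - ∑ i ∈ Finset.Icc 2 n \ (Finset.Icc 1 s).image t, |c * βstar i| = 1) ∧
      ((s : ℝ) + 1) * (∑ i ∈ Finset.Icc 1 n, (∑ k ∈ Finset.Icc 1 i, c * βstar k)^2) / n
        = ((s : ℝ) + 1) / n *
          (1 / (1 / (d 1 : ℝ) + (∑ j ∈ Finset.Icc 2 s, 4 / (d j : ℝ)) + 1 / (d (s+1) : ℝ))) :=
  stmt10_general n s hs t ht htmem d hd1 hdj hds T hT fstar hfstar βstar hβ1 hβi
end

section
/- Let w ∈ ℝ^n with w_i = 1 for i ∈ {1} ∪ S and 0 ≤ w_i ≤ 1 otherwise, and let D be the incidence matrix of the path graph. Define the weighted compatibility constant κ_w²(S) = min{(s+1)‖Xβ‖₂²/n : ‖(w⊙β)_S‖₁ - ‖(w⊙β)_{-({1}∪S)}‖₁ = 1}. Then, under the block-length assumptions of the unweighted bound, κ_w²(S) ≥ ((s+1)/n)·1/(‖w‖_∞ √K + ‖Dw‖₂)² ≥ ((s+1)/n)·1/(2(‖w‖_∞² K + ‖Dw‖₂²)), where K is the constant from the unweighted lower bound. -/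
/-!
Write `b = Xβ` for the partial sums of `β` and `c = w ⊙ b`. Since
`w i β i = (c i - c (i-1)) - (w i - w (i-1)) b (i-1)`, the weighted constraint is the unweighted
one for `c` up to an error `∑ |w i - w (i-1)| |b (i-1)| ≤ ‖Dw‖₂ ‖b‖₂`. For the unweighted part,
each jump `t j` sits between two half-blocks, and `|c (t j - 1)|`, `|c (t j)|` are bounded by the
root mean square of `c` on their half-block plus the variation of `c` inside it. The variations are
paid for by the negative sum, and Cauchy–Schwarz over the half-blocks, of sizes `d 1`, `u j`,
`d j - u j` and `d (s+1)`, gives `√K ‖c‖₂ ≤ √K ‖b‖₂` as `0 ≤ w ≤ 1`. Hence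
`1 ≤ (√K + ‖Dw‖₂) ‖Xβ‖₂`, while `‖w‖_∞ = w 1 = 1`.
-/

open Finset Real

section PathVariation

variable (c : ℕ → ℝ)

theorem abs_sub_le_sum_Ioc_abs_sub {m x : ℕ} (h : m ≤ x) :
    |c x - c m| ≤ ∑ k ∈ Ioc m x, |c k - c (k - 1)| := by
  induction x, h using Nat.le_induction with
  | base => simp
  | succ x hx ih =>
    rw [sum_Ioc_succ_top hx, Nat.add_sub_cancel]
    linarith [abs_sub_le (c (x + 1)) (c x) (c m)]

theorem exists_mem_le_sum_div_card {ι : Type*} {s : Finset ι} (hs : s.Nonempty) (f : ι → ℝ) :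
    ∃ i ∈ s, f i ≤ (∑ j ∈ s, f j) / #s :=
  exists_le_of_sum_le hs <| by
    rw [sum_const, nsmul_eq_mul, mul_div_cancel₀ _ (by simp [hs.ne_empty])]

theorem abs_le_sqrt_mul_add_sum_Ioo {p q x : ℕ} (hx : x ∈ Ico p q) :
    |c x| ≤ √(∑ i ∈ Ico p q, c i ^ 2) * √(1 / (q - p : ℕ)) +
      ∑ k ∈ Ioo p q, |c k - c (k - 1)| := by
  obtain ⟨m, hm, hcm⟩ := exists_mem_le_sum_div_card ⟨x, hx⟩ (fun i => c i ^ 2)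
  have hmean : |c m| ≤ √(∑ i ∈ Ico p q, c i ^ 2) * √(1 / (q - p : ℕ)) := by
    rw [← sqrt_mul (sum_nonneg fun _ _ => sq_nonneg _), mul_one_div, ← Nat.card_Ico]
    exact abs_le_sqrt hcm
  have hvar : |c x - c m| ≤ ∑ k ∈ Ioo p q, |c k - c (k - 1)| := by
    rw [mem_Ico] at hx hm
    have hsub : ∀ {y z}, p ≤ y → z < q → Ioc y z ⊆ Ioo p q := fun hy hz k hk => by
      rw [mem_Ioc] at hk; rw [mem_Ioo]; omega
    rcases le_total m x with h | h
    · exact (abs_sub_le_sum_Ioc_abs_sub c h).trans <|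
        sum_le_sum_of_subset_of_nonneg (hsub hm.1 hx.2) fun _ _ _ => abs_nonneg _
    · rw [abs_sub_comm]
      exact (abs_sub_le_sum_Ioc_abs_sub c h).trans <|
        sum_le_sum_of_subset_of_nonneg (hsub hx.1 hm.2) fun _ _ _ => abs_nonneg _
  linarith [abs_sub_abs_le_abs_sub (c x) (c m)]

theorem abs_jump_le {ℓ t r : ℕ} (ht : t ∈ Ioo ℓ r) :
    |c t - c (t - 1)| ≤
      √(∑ i ∈ Ico ℓ t, c i ^ 2) * √(1 / (t - ℓ : ℕ)) +
        √(∑ i ∈ Ico t r, c i ^ 2) * √(1 / (r - t : ℕ)) +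
        ∑ k ∈ Ioo ℓ r \ {t}, |c k - c (k - 1)| := by
  rw [mem_Ioo] at ht
  have hleft := abs_le_sqrt_mul_add_sum_Ioo c (show t - 1 ∈ Ico ℓ t by rw [mem_Ico]; omega)
  have hright := abs_le_sqrt_mul_add_sum_Ioo c (show t ∈ Ico t r by rw [mem_Ico]; omega)
  have hsplit : Ioo ℓ r \ {t} = Ioo ℓ t ∪ Ioo t r := by
    ext k; simp only [mem_sdiff, mem_Ioo, mem_singleton, mem_union]; omega
  rw [hsplit, sum_union (disjoint_left.2 fun k hk hk' => by rw [mem_Ioo] at hk hk'; omega)]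
  linarith [abs_sub (c t) (c (t - 1))]

end PathVariation

theorem sqrt_mul_sqrt_add_sqrt_mul_sqrt_le {a b x y : ℝ} (ha : 0 ≤ a) (hb : 0 ≤ b)
    (hx : 0 ≤ x) (hy : 0 ≤ y) : √a * √x + √b * √y ≤ √(a + b) * √(x + y) := by
  simpa [Fin.sum_univ_two] using sum_sqrt_mul_sqrt_le univ (f := ![a, b]) (g := ![x, y])
    (fun i => by fin_cases i <;> simpa) (fun i => by fin_cases i <;> simpa)

theorem sum_sum_le_sum_of_pairwiseDisjoint_s11 {ι κ : Type*} [DecidableEq κ] {J : Finset ι}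
    {F : ι → Finset κ} {S : Finset κ} {f : κ → ℝ} (hdisj : (J : Set ι).PairwiseDisjoint F)
    (hsub : ∀ j ∈ J, F j ⊆ S) (hf : ∀ k ∈ S, 0 ≤ f k) :
    ∑ j ∈ J, ∑ k ∈ F j, f k ≤ ∑ k ∈ S, f k := by
  rw [← sum_biUnion hdisj]
  exact sum_le_sum_of_subset_of_nonneg (biUnion_subset.2 hsub) fun k hk _ => hf k hk

theorem sum_abs_jump_sub_le_of_blocks {ι : Type*} (J : Finset ι) (n : ℕ) (ℓ t r : ι → ℕ)
    (ht : ∀ j ∈ J, t j ∈ Ioo (ℓ j) (r j)) (hsub : ∀ j ∈ J, Ico (ℓ j) (r j) ⊆ Icc 1 n)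
    (hdisj : (J : Set ι).PairwiseDisjoint fun j => Ico (ℓ j) (r j)) (c : ℕ → ℝ) :
    ∑ j ∈ J, |c (t j) - c (t j - 1)| - ∑ i ∈ Icc 2 n \ J.image t, |c i - c (i - 1)| ≤
      √(∑ j ∈ J, (1 / ((t j - ℓ j : ℕ) : ℝ) + 1 / ((r j - t j : ℕ) : ℝ))) *
        √(∑ i ∈ Icc 1 n, c i ^ 2) := by
  set E := fun j => Ioo (ℓ j) (r j) \ {t j}
  have hjumps : ∑ j ∈ J, |c (t j) - c (t j - 1)| ≤
      ∑ j ∈ J, √(∑ i ∈ Ico (ℓ j) (r j), c i ^ 2) *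
          √(1 / ((t j - ℓ j : ℕ) : ℝ) + 1 / ((r j - t j : ℕ) : ℝ)) +
        ∑ j ∈ J, ∑ k ∈ E j, |c k - c (k - 1)| := by
    rw [← sum_add_distrib]
    refine sum_le_sum fun j hj => (abs_jump_le c (ht j hj)).trans ?_
    have htj := mem_Ioo.1 (ht j hj)
    rw [← sum_Ico_consecutive _ htj.1.le htj.2.le]
    gcongr
    exact sqrt_mul_sqrt_add_sqrt_mul_sqrt_le (by positivity) (by positivity) (by positivity)
      (by positivity)
  have hmass : ∑ j ∈ J, √(∑ i ∈ Ico (ℓ j) (r j), c i ^ 2) *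
        √(1 / ((t j - ℓ j : ℕ) : ℝ) + 1 / ((r j - t j : ℕ) : ℝ)) ≤
      √(∑ j ∈ J, (1 / ((t j - ℓ j : ℕ) : ℝ) + 1 / ((r j - t j : ℕ) : ℝ))) *
        √(∑ i ∈ Icc 1 n, c i ^ 2) := by
    refine (sum_sqrt_mul_sqrt_le J (fun _ => by positivity) (fun _ => by positivity)).trans ?_
    rw [mul_comm]
    gcongr
    exact sum_sum_le_sum_of_pairwiseDisjoint_s11 hdisj hsub fun _ _ => sq_nonneg _
  have hedges : ∑ j ∈ J, ∑ k ∈ E j, |c k - c (k - 1)| ≤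
      ∑ i ∈ Icc 2 n \ J.image t, |c i - c (i - 1)| := by
    refine sum_sum_le_sum_of_pairwiseDisjoint_s11
      (hdisj.mono fun j => sdiff_subset.trans Ioo_subset_Ico_self) (fun j hj k hk => ?_)
      fun _ _ => abs_nonneg _
    obtain ⟨hk, hkt⟩ := mem_sdiff.1 hk
    have hℓ := hsub j hj (left_mem_Ico.2 ((mem_Ioo.1 (ht j hj)).1.trans (mem_Ioo.1 (ht j hj)).2))
    have hkn := hsub j hj (Ioo_subset_Ico_self hk)
    rw [mem_Icc] at hℓ hkn
    rw [mem_Ioo] at hk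
    refine mem_sdiff.2 ⟨mem_Icc.2 ⟨by omega, hkn.2⟩, fun hkT => hkt ?_⟩
    obtain ⟨j', hj', rfl⟩ := mem_image.1 hkT
    rw [hdisj.elim_finset hj hj' (t j') (mem_Ico.2 ⟨hk.1.le, hk.2⟩)
      (Ioo_subset_Ico_self (ht j' hj'))]
    exact mem_singleton_self _
  linarith

theorem Monotone.pairwiseDisjoint_Ico_add_one {a : ℕ → ℕ} (ha : Monotone a) (J : Set ℕ) :
    J.PairwiseDisjoint fun j => Ico (a j) (a (j + 1)) := fun _ _ _ _ hij => by
  simpa [← disjoint_coe] using ha.pairwise_disjoint_on_Ico_succ hij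

section CutPoints

variable (n s : ℕ) (t u : ℕ → ℕ)

/-- The paper's `j`-th block `[t (j-1), t j)` is cut at `t (j-1) + u j`, so that the jump `t j`
lies in `[cutPoint j, cutPoint (j+1))`, made of the second half of block `j` and the first half
of block `j+1`. The first block `[1, t 1)` and the last block `[t s, n]` are not cut. -/
def cutPoint (j : ℕ) : ℕ :=
  if j ≤ 1 then 1 else if j ≤ s then t (j - 1) + u j else n + 1

variable {n s t u}

theorem mem_Ioo_cutPoint (ht1 : 1 < t 1) (hts : t s ≤ n)
    (hcut : ∀ j, 2 ≤ j → j ≤ s → 0 < u j ∧ t (j - 1) + u j < t j) {j : ℕ} (hj : j ∈ Icc 1 s) :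
    t j ∈ Ioo (cutPoint n s t u j) (cutPoint n s t u (j + 1)) := by
  rw [mem_Icc] at hj
  have hl : 2 ≤ j → t (j - 1) + u j < t j := fun h => (hcut j h hj.2).2
  have hr : j + 1 ≤ s → 0 < u (j + 1) := fun h => (hcut (j + 1) (by omega) h).1
  have h1 : j = 1 → 1 < t j := by rintro rfl; exact ht1
  have hn : j = s → t j ≤ n := by rintro rfl; exact hts
  simp only [cutPoint, mem_Ioo, Nat.add_sub_cancel]
  split_ifs <;> omega

theorem monotone_cutPoint (ht1 : 1 < t 1) (hts : t s ≤ n)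
    (hcut : ∀ j, 2 ≤ j → j ≤ s → 0 < u j ∧ t (j - 1) + u j < t j) :
    Monotone (cutPoint n s t u) := by
  refine monotone_nat_of_le_succ fun j => ?_
  rcases Nat.lt_or_ge j 1 with h | h
  · simp [cutPoint, Nat.lt_one_iff.1 h]
  rcases Nat.lt_or_ge s j with h' | h'
  · simp only [cutPoint]; split_ifs <;> omega
  obtain ⟨hl, hr⟩ := mem_Ioo.1 (mem_Ioo_cutPoint ht1 hts hcut (mem_Icc.2 ⟨h, h'⟩))
  exact (hl.trans hr).le

theorem sum_one_div_cutPoint (hs : 1 ≤ s) (hts : t s ≤ n)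
    (hcut : ∀ j, 2 ≤ j → j ≤ s → 0 < u j ∧ t (j - 1) + u j < t j)
    {d : ℕ → ℕ} (hd1 : d 1 = t 1 - 1) (hdj : ∀ j, 2 ≤ j → j ≤ s → d j = t j - t (j - 1))
    (hds : d (s + 1) = n - t s + 1) :
    ∑ j ∈ Icc 1 s, (1 / ((t j - cutPoint n s t u j : ℕ) : ℝ) +
        1 / ((cutPoint n s t u (j + 1) - t j : ℕ) : ℝ)) =
      1 / (d 1 : ℝ) + ∑ j ∈ Icc 2 s, (1 / (u j : ℝ) + 1 / ((d j : ℝ) - (u j : ℝ))) +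
        1 / (d (s + 1) : ℝ) := by
  have hleft : ∀ j ∈ Icc 2 s, ((t j - cutPoint n s t u j : ℕ) : ℝ) = (d j : ℝ) - (u j : ℝ) := by
    intro j hj
    rw [mem_Icc] at hj
    have := hcut j hj.1 hj.2
    rw [← Nat.cast_sub (by rw [hdj j hj.1 hj.2]; omega), hdj j hj.1 hj.2, cutPoint,
      if_neg (by omega), if_pos hj.2]
    congr 1; omega
  have hright : ∀ j ∈ Ico 1 s, cutPoint n s t u (j + 1) - t j = u (j + 1) := by
    intro j hj
    rw [mem_Ico] at hj
    rw [cutPoint, if_neg (by omega), if_pos (by omega), Nat.add_sub_cancel, Nat.add_sub_cancel_left]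
  have hfirst : t 1 - cutPoint n s t u 1 = d 1 := by rw [hd1, cutPoint, if_pos le_rfl]
  have hlast : cutPoint n s t u (s + 1) - t s = d (s + 1) := by
    rw [hds, cutPoint, if_neg (by omega), if_neg (by omega)]; omega
  have hsum_left : ∑ j ∈ Icc 2 s, 1 / ((t j - cutPoint n s t u j : ℕ) : ℝ) =
      ∑ j ∈ Icc 2 s, 1 / ((d j : ℝ) - (u j : ℝ)) :=
    sum_congr rfl fun j hj => by rw [hleft j hj]
  have hsum_right : ∑ j ∈ Ico 1 s, 1 / ((cutPoint n s t u (j + 1) - t j : ℕ) : ℝ) =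
      ∑ j ∈ Icc 2 s, 1 / (u j : ℝ) := by
    rw [sum_congr rfl fun j hj => by rw [hright j hj], sum_Ico_add' (fun j => 1 / (u j : ℝ)),
      Ico_add_one_right_eq_Icc]
  rw [sum_add_distrib, ← sum_Ioc_add_eq_sum_Icc hs, ← Icc_add_one_left_eq_Ioc, one_add_one_eq_two,
    ← sum_Ico_add_eq_sum_Icc hs, hsum_left, hsum_right, hfirst, hlast, sum_add_distrib]
  ring

end CutPoints

theorem sum_abs_jump_sub_le_of_block_lengths {n s : ℕ} {t d u : ℕ → ℕ} (hs : 1 ≤ s)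
    (ht1 : 1 < t 1) (hts : t s ≤ n)
    (hcut : ∀ j, 2 ≤ j → j ≤ s → 0 < u j ∧ t (j - 1) + u j < t j)
    (hd1 : d 1 = t 1 - 1) (hdj : ∀ j, 2 ≤ j → j ≤ s → d j = t j - t (j - 1))
    (hds : d (s + 1) = n - t s + 1) (c : ℕ → ℝ) :
    ∑ j ∈ Icc 1 s, |c (t j) - c (t j - 1)| - ∑ i ∈ Icc 2 n \ (Icc 1 s).image t, |c i - c (i - 1)| ≤
      √(1 / (d 1 : ℝ) + ∑ j ∈ Icc 2 s, (1 / (u j : ℝ) + 1 / ((d j : ℝ) - (u j : ℝ))) +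
        1 / (d (s + 1) : ℝ)) * √(∑ i ∈ Icc 1 n, c i ^ 2) := by
  have hmono := monotone_cutPoint ht1 hts hcut
  have hfirst : cutPoint n s t u 1 = 1 := by simp [cutPoint]
  have hlast : cutPoint n s t u (s + 1) = n + 1 := by
    rw [cutPoint, if_neg (by omega), if_neg (by omega)]
  rw [← sum_one_div_cutPoint hs hts hcut hd1 hdj hds]
  refine sum_abs_jump_sub_le_of_blocks _ n _ t _ (fun j hj => mem_Ioo_cutPoint ht1 hts hcut hj)
    (fun j hj k hk => ?_) (hmono.pairwiseDisjoint_Ico_add_one _) c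
  rw [mem_Icc] at hj
  have h1 := hmono hj.1
  have h2 := hmono (show j + 1 ≤ s + 1 by omega)
  rw [mem_Ico] at hk
  rw [mem_Icc]
  omega

theorem sum_sq_sub_one_le_sum_sq (b : ℕ → ℝ) (n : ℕ) :
    ∑ i ∈ Icc 2 n, b (i - 1) ^ 2 ≤ ∑ i ∈ Icc 1 n, b i ^ 2 := by
  rw [← sum_image (f := fun i => b i ^ 2) (g := (· - 1)) fun i hi j hj h => by
    simp only [coe_Icc, Set.mem_Icc] at hi hj; simp only at h; omega]
  refine sum_le_sum_of_subset_of_nonneg (fun k hk => ?_) fun _ _ _ => sq_nonneg _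
  obtain ⟨i, hi, rfl⟩ := mem_image.1 hk
  rw [mem_Icc] at hi ⊢
  omega

theorem sum_abs_sub_mul_abs_le (w b : ℕ → ℝ) (n : ℕ) :
    ∑ i ∈ Icc 2 n, |w i - w (i - 1)| * |b (i - 1)| ≤
      √(∑ i ∈ Icc 2 n, (w i - w (i - 1)) ^ 2) * √(∑ i ∈ Icc 1 n, b i ^ 2) := by
  refine (sum_mul_le_sqrt_mul_sqrt _ _ _).trans ?_
  simp only [sq_abs]
  gcongr
  exact sum_sq_sub_one_le_sum_sq b n

theorem sum_abs_mul_sub_sum_le {n : ℕ} {P : Finset ℕ} (hP : P ⊆ Icc 2 n) (w b : ℕ → ℝ) :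
    ∑ i ∈ P, |w i * (b i - b (i - 1))| - ∑ i ∈ Icc 2 n \ P, |w i * (b i - b (i - 1))| ≤
      (∑ i ∈ P, |w i * b i - w (i - 1) * b (i - 1)| -
        ∑ i ∈ Icc 2 n \ P, |w i * b i - w (i - 1) * b (i - 1)|) +
      √(∑ i ∈ Icc 2 n, (w i - w (i - 1)) ^ 2) * √(∑ i ∈ Icc 1 n, b i ^ 2) := by
  have hid : ∀ i, w i * (b i - b (i - 1)) =
      (w i * b i - w (i - 1) * b (i - 1)) - (w i - w (i - 1)) * b (i - 1) := fun i => by ring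
  have hP' : ∑ i ∈ P, |w i * (b i - b (i - 1))| ≤ ∑ i ∈ P, |w i * b i - w (i - 1) * b (i - 1)| +
      ∑ i ∈ P, |w i - w (i - 1)| * |b (i - 1)| := by
    rw [← sum_add_distrib]
    exact sum_le_sum fun i _ => by rw [hid, ← abs_mul]; exact abs_sub _ _
  have hQ : ∑ i ∈ Icc 2 n \ P, |w i * b i - w (i - 1) * b (i - 1)| ≤
      ∑ i ∈ Icc 2 n \ P, |w i * (b i - b (i - 1))| +
        ∑ i ∈ Icc 2 n \ P, |w i - w (i - 1)| * |b (i - 1)| := by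
    rw [← sum_add_distrib]
    refine sum_le_sum fun i _ => ?_
    rw [hid, ← abs_mul]
    linarith [abs_sub_abs_le_abs_sub (w i * b i - w (i - 1) * b (i - 1))
      ((w i - w (i - 1)) * b (i - 1))]
  linarith [sum_sdiff hP (f := fun i => |w i - w (i - 1)| * |b (i - 1)|),
    sum_abs_sub_mul_abs_le w b n]

theorem sum_sq_mul_le_sum_sq {n : ℕ} {w : ℕ → ℝ} (hw : ∀ i ∈ Icc 1 n, |w i| ≤ 1) (b : ℕ → ℝ) :
    ∑ i ∈ Icc 1 n, (w i * b i) ^ 2 ≤ ∑ i ∈ Icc 1 n, b i ^ 2 :=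
  sum_le_sum fun i hi => by
    rw [mul_pow]
    exact mul_le_of_le_one_left (sq_nonneg _) (sq_le_one_iff_abs_le_one _ |>.2 (hw i hi))

theorem sum_Icc_one_sub_sum_Icc_one_pred (β : ℕ → ℝ) {i : ℕ} (hi : 1 ≤ i) :
    ∑ k ∈ Icc 1 i, β k - ∑ k ∈ Icc 1 (i - 1), β k = β i := by
  obtain ⟨m, rfl⟩ := Nat.exists_eq_add_of_le' hi
  rw [sum_Icc_succ_top hi, Nat.add_sub_cancel, add_sub_cancel_left]

theorem one_le_mul_sqrt_of_compatible {n : ℕ} {P : Finset ℕ} (hP : P ⊆ Icc 2 n) {K : ℝ}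
    (hK : ∀ c : ℕ → ℝ, ∑ i ∈ P, |c i - c (i - 1)| - ∑ i ∈ Icc 2 n \ P, |c i - c (i - 1)| ≤
      √K * √(∑ i ∈ Icc 1 n, c i ^ 2))
    {w b β : ℕ → ℝ} (hw : ∀ i ∈ Icc 1 n, |w i| ≤ 1) (hβ : ∀ i ∈ Icc 2 n, b i - b (i - 1) = β i)
    (h1 : 1 ≤ ∑ i ∈ P, |w i * β i| - ∑ i ∈ Icc 2 n \ P, |w i * β i|) :
    1 ≤ (√K + √(∑ i ∈ Icc 2 n, (w i - w (i - 1)) ^ 2)) * √(∑ i ∈ Icc 1 n, b i ^ 2) := by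
  have hβP : ∑ i ∈ P, |w i * β i| = ∑ i ∈ P, |w i * (b i - b (i - 1))| :=
    sum_congr rfl fun i hi => by rw [hβ i (hP hi)]
  have hβQ : ∑ i ∈ Icc 2 n \ P, |w i * β i| = ∑ i ∈ Icc 2 n \ P, |w i * (b i - b (i - 1))| :=
    sum_congr rfl fun i hi => by rw [hβ i (sdiff_subset hi)]
  have hc : √(∑ i ∈ Icc 1 n, (w i * b i) ^ 2) ≤ √(∑ i ∈ Icc 1 n, b i ^ 2) :=
    sqrt_le_sqrt (sum_sq_mul_le_sum_sq hw b)
  rw [hβP, hβQ] at h1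
  nlinarith [sum_abs_mul_sub_sum_le hP w b, hK fun i => w i * b i, sqrt_nonneg K]

theorem one_div_sq_le_of_one_le_mul_sqrt {x Q : ℝ} (hx : 0 ≤ x) (h : 1 ≤ x * √Q) :
    1 / x ^ 2 ≤ Q := by
  have hQ : 0 < √Q := by
    by_contra! hQ
    nlinarith [sqrt_nonneg Q]
  have hx' : 0 < x := by
    by_contra! hx'
    nlinarith
  rw [div_le_iff₀ (by positivity), ← sq_sqrt (sqrt_pos.1 hQ).le]
  nlinarith

theorem one_div_two_mul_add_le_one_div_sq {a b : ℝ} (ha : 0 ≤ a) (hb : 0 ≤ b) :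
    1 / (2 * (a + b)) ≤ 1 / (√a + √b) ^ 2 := by
  rcases (sq_nonneg (√a + √b)).eq_or_lt with h | h
  · have hab : a + b = 0 := by nlinarith [sq_sqrt ha, sq_sqrt hb, sqrt_nonneg a, sqrt_nonneg b]
    rw [hab, ← h]
    simp
  · refine one_div_le_one_div_of_le h ?_
    nlinarith [add_sq_le (a := √a) (b := √b), sq_sqrt ha, sq_sqrt hb]

theorem injOn_Icc_of_pred_lt {s : ℕ} {t : ℕ → ℕ} (ht : ∀ j, 2 ≤ j → j ≤ s → t (j - 1) < t j) :
    Set.InjOn t (Icc 1 s) := by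
  rw [coe_Icc]
  refine (strictMonoOn_of_lt_add_one Set.ordConnected_Icc fun j _ hj hj1 => ?_).injOn
  simpa using ht (j + 1) (by linarith [hj.1]) hj1.2

theorem stmt11_general (n s : ℕ) (hn : 1 ≤ n) (hs : 1 ≤ s)
    (t : ℕ → ℕ)
    (ht : ∀ j, 2 ≤ j → j ≤ s → t (j-1) < t j)
    (htmem : ∀ j, 1 ≤ j → j ≤ s → 2 ≤ t j ∧ t j ≤ n)
    (d u : ℕ → ℕ)
    (hd1 : d 1 = t 1 - 1)
    (hdj : ∀ j, 2 ≤ j → j ≤ s → d j = t j - t (j-1))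
    (hds : d (s+1) = n - t s + 1)
    (hu : ∀ j, 2 ≤ j → j ≤ s → 2 ≤ u j ∧ u j ≤ d j - 2)
    (w : ℕ → ℝ)
    (hw1 : w 1 = 1)
    (hwb : ∀ i, 1 ≤ i → i ≤ n → 0 ≤ w i ∧ w i ≤ 1)
    (K Winf Dw2 : ℝ)
    (hK : K = 1 / (d 1 : ℝ)
        + (∑ j ∈ Finset.Icc 2 s, (1 / (u j : ℝ) + 1 / ((d j : ℝ) - (u j : ℝ))))
        + 1 / (d (s+1) : ℝ))
    (hWinf : Winf = (Finset.Icc 1 n).sup' (Finset.nonempty_Icc.mpr hn) w)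
    (hDw2 : Dw2 = ∑ i ∈ Finset.Icc 2 n, (w i - w (i-1))^2) :
    (∀ β : ℕ → ℝ,
      (∑ j ∈ Finset.Icc 1 s, |w (t j) * β (t j)|
        - ∑ i ∈ Finset.Icc 2 n \ (Finset.Icc 1 s).image t, |w i * β i| = 1) →
      ((s : ℝ) + 1) / n * (1 / (Winf * Real.sqrt K + Real.sqrt Dw2)^2)
        ≤ ((s : ℝ) + 1) * (∑ i ∈ Finset.Icc 1 n, (∑ k ∈ Finset.Icc 1 i, β k)^2) / n) ∧
    ((s : ℝ) + 1) / n * (1 / (2 * (Winf^2 * K + Dw2)))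
      ≤ ((s : ℝ) + 1) / n * (1 / (Winf * Real.sqrt K + Real.sqrt Dw2)^2) := by
  have hcut : ∀ j, 2 ≤ j → j ≤ s → 0 < u j ∧ t (j - 1) + u j < t j := fun j hj hjs => by
    have := hdj j hj hjs; have := hu j hj hjs; omega
  have ht1 : 1 < t 1 := (htmem 1 le_rfl hs).1
  have hts : t s ≤ n := (htmem s hs le_rfl).2
  have hinj := injOn_Icc_of_pred_lt ht
  have hT : (Icc 1 s).image t ⊆ Icc 2 n :=
    image_subset_iff.2 fun j hj => mem_Icc.2 (htmem j (mem_Icc.1 hj).1 (mem_Icc.1 hj).2)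
  have hw : ∀ i ∈ Icc 1 n, 0 ≤ w i ∧ w i ≤ 1 := fun i hi => hwb i (mem_Icc.1 hi).1 (mem_Icc.1 hi).2
  have hW : Winf = 1 := hWinf ▸ le_antisymm (sup'_le _ _ fun i hi => (hw i hi).2)
    (hw1 ▸ le_sup' w (mem_Icc.2 ⟨le_rfl, hn⟩))
  have hK0 : 0 ≤ K := by rw [hK, ← sum_one_div_cutPoint hs hts hcut hd1 hdj hds]; positivity
  refine ⟨fun β hβ => ?_, ?_⟩
  · have key := one_le_mul_sqrt_of_compatible hT (K := K) (b := fun i => ∑ k ∈ Icc 1 i, β k)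
      (fun c => by
        rw [sum_image hinj, hK]
        exact sum_abs_jump_sub_le_of_block_lengths hs ht1 hts hcut hd1 hdj hds c)
      (fun i hi => abs_le.2 ⟨by linarith [(hw i hi).1], (hw i hi).2⟩)
      (fun i hi => sum_Icc_one_sub_sum_Icc_one_pred β (by rw [mem_Icc] at hi; omega))
      (by rw [sum_image hinj]; exact hβ.ge)
    rw [← hDw2] at key
    rw [hW, one_mul, mul_div_right_comm]
    gcongr
    exact one_div_sq_le_of_one_le_mul_sqrt (by positivity) key
  · rw [hW, one_pow, one_mul, one_mul]
    exact mul_le_mul_of_nonneg_left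
      (one_div_two_mul_add_le_one_div_sq hK0 (hDw2 ▸ by positivity)) (by positivity)

/-- Lower bound on the weighted compatibility constant for the path graph:
with weights `w` equal to `1` on `{1} ∪ S` and in `[0,1]` elsewhere,
`κ_w²(S) ≥ ((s+1)/n)·1/(‖w‖_∞ √K + ‖Dw‖₂)² ≥ ((s+1)/n)·1/(2(‖w‖_∞² K + ‖Dw‖₂²))`,
where `D` is the incidence matrix of the path graph and `K` is the constant from the
unweighted lower bound. -/
theorem stmt11 (n s : ℕ) (hn : 1 ≤ n) (hs : 1 ≤ s)
    (t : ℕ → ℕ)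
    (ht : ∀ j, 2 ≤ j → j ≤ s → t (j-1) < t j)
    (htmem : ∀ j, 1 ≤ j → j ≤ s → 2 ≤ t j ∧ t j ≤ n)
    (d u : ℕ → ℕ)
    (hd1 : d 1 = t 1 - 1)
    (hdj : ∀ j, 2 ≤ j → j ≤ s → d j = t j - t (j-1))
    (hds : d (s+1) = n - t s + 1)
    (hd1b : 2 ≤ d 1) (hdsb : 2 ≤ d (s+1))
    (hdjb : ∀ j, 2 ≤ j → j ≤ s → 4 ≤ d j)
    (hu : ∀ j, 2 ≤ j → j ≤ s → 2 ≤ u j ∧ u j ≤ d j - 2)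
    (w : ℕ → ℝ)
    (hw1 : w 1 = 1) (hwS : ∀ j, 1 ≤ j → j ≤ s → w (t j) = 1)
    (hwb : ∀ i, 1 ≤ i → i ≤ n → 0 ≤ w i ∧ w i ≤ 1)
    (K Winf Dw2 : ℝ)
    (hK : K = 1 / (d 1 : ℝ)
        + (∑ j ∈ Finset.Icc 2 s, (1 / (u j : ℝ) + 1 / ((d j : ℝ) - (u j : ℝ))))
        + 1 / (d (s+1) : ℝ))
    (hWinf : Winf = (Finset.Icc 1 n).sup' (Finset.nonempty_Icc.mpr hn) w)
    (hDw2 : Dw2 = ∑ i ∈ Finset.Icc 2 n, (w i - w (i-1))^2) :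
    (∀ β : ℕ → ℝ,
      (∑ j ∈ Finset.Icc 1 s, |w (t j) * β (t j)|
        - ∑ i ∈ Finset.Icc 2 n \ (Finset.Icc 1 s).image t, |w i * β i| = 1) →
      ((s : ℝ) + 1) / n * (1 / (Winf * Real.sqrt K + Real.sqrt Dw2)^2)
        ≤ ((s : ℝ) + 1) * (∑ i ∈ Finset.Icc 1 n, (∑ k ∈ Finset.Icc 1 i, β k)^2) / n) ∧
    ((s : ℝ) + 1) / n * (1 / (2 * (Winf^2 * K + Dw2)))
      ≤ ((s : ℝ) + 1) / n * (1 / (Winf * Real.sqrt K + Real.sqrt Dw2)^2) :=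
  stmt11_general n s hn hs t ht htmem d u hd1 hdj hds hu w hw1 hwb K Winf Dw2 hK hWinf hDw2
end

section
/- For any integer b ≥ 2 and 1 ≤ i ≤ b, with a_i = √(i(b-i)/b) and a_{i-1} = √((i-1)(b-(i-1))/b), one has (a_i - a_{i-1})² ≤ (b+1-2i)² / (b·(-2i² + 2(b+1)i - (b+1))), and consequently Σ_{i=1}^{b} (a_i - a_{i-1})² ≤ (5/2)·log(⌈b/2⌉·⌊b/2⌋) whenever b ≥ 4. -/
/-!
Writing `a_i = √f(i)` with `f(x) = x(b-x)/b`, the identity `(√x - √y)²(√x + √y)² = (x-y)²`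
and `(√x + √y)² ≥ x + y` give the first bound, since `f(i) - f(i-1) = (b+1-2i)/b` and
`f(i) + f(i-1) = (-2i² + 2(b+1)i - (b+1))/b`. On the rising half `2i ≤ b+1` that bound is at
most `1/i`, as its denominator is at least `b·i(b-i) ≥ i(b+1-2i)²`. As `a_{b-i} = a_i`, the
sum splits into two such halves, of lengths `⌈b/2⌉` and `⌊b/2⌋`, each bounded by a harmonic sum
`H_n ≤ 1 + log n`; finally `2 ≤ (3/2) log(⌈b/2⌉⌊b/2⌋)` because the product is at least
`4 > e^{4/3}`.
-/

open Finset Real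

lemma sq_sqrt_sub_sqrt_le {x y : ℝ} (hx : 0 ≤ x) (hy : 0 ≤ y) :
    (√x - √y) ^ 2 ≤ (x - y) ^ 2 / (x + y) := by
  rcases (add_nonneg hx hy).eq_or_lt with hxy | hxy
  · obtain ⟨rfl, rfl⟩ : x = 0 ∧ y = 0 := ⟨by linarith, by linarith⟩
    simp
  have hprod : (√x - √y) ^ 2 * (√x + √y) ^ 2 = (x - y) ^ 2 := by
    rw [← mul_pow, mul_comm, ← sq_sub_sq, sq_sqrt hx, sq_sqrt hy]
  have hsum : x + y ≤ (√x + √y) ^ 2 := by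
    nlinarith [sq_sqrt hx, sq_sqrt hy, sqrt_nonneg x, sqrt_nonneg y]
  rw [le_div_iff₀ hxy, ← hprod]
  exact mul_le_mul_of_nonneg_left hsum (sq_nonneg _)

lemma sq_sqrt_parabola_sub_le {b x : ℝ} (hx : 1 ≤ x) (hxb : x ≤ b) :
    (√(x * (b - x) / b) - √((x - 1) * (b - (x - 1)) / b)) ^ 2
      ≤ (b + 1 - 2 * x) ^ 2 / (b * (-2 * x ^ 2 + 2 * (b + 1) * x - (b + 1))) := by
  have hb : 0 < b := by linarith
  refine (sq_sqrt_sub_sqrt_le (by positivity) (div_nonneg (by nlinarith) hb.le)).trans_eq ?_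
  field_simp
  ring

lemma sq_sub_div_parabola_le_inv {b x : ℝ} (hx : 1 ≤ x) (hxb : 2 * x ≤ b + 1) :
    (b + 1 - 2 * x) ^ 2 / (b * (-2 * x ^ 2 + 2 * (b + 1) * x - (b + 1))) ≤ x⁻¹ := by
  have hD : x * (b - x) ≤ -2 * x ^ 2 + 2 * (b + 1) * x - (b + 1) := by nlinarith
  have hc : (b + 1 - 2 * x) ^ 2 ≤ b * (b - x) := by nlinarith
  refine div_le_of_le_mul₀ (by nlinarith) (by positivity) ?_
  rw [inv_mul_eq_div, le_div_iff₀ (by positivity)]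
  nlinarith [mul_le_mul_of_nonneg_left hD (by linarith : 0 ≤ b)]

lemma sum_Icc_inv_le_one_add_log (n : ℕ) : ∑ i ∈ Icc 1 n, (i : ℝ)⁻¹ ≤ 1 + log n := by
  simpa [harmonic_eq_sum_Icc] using harmonic_le_one_add_log n

lemma Finset.sum_Icc_one_eq_add_of_reflect {M : Type*} [AddCommMonoid M] (t : ℕ → M) (b : ℕ)
    (ht : ∀ i ∈ Icc 1 b, t (b + 1 - i) = t i) :
    ∑ i ∈ Icc 1 b, t i = ∑ i ∈ Icc 1 ((b + 1) / 2), t i + ∑ i ∈ Icc 1 (b / 2), t i := by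
  have hsplit : Icc 1 b = Icc 1 ((b + 1) / 2) ∪ Icc ((b + 1) / 2 + 1) b := by
    ext i; simp only [mem_union, mem_Icc]; omega
  rw [hsplit, sum_union (disjoint_left.2 fun i hi hi' => by simp only [mem_Icc] at hi hi'; omega)]
  congr 1
  refine sum_nbij' (fun i => b + 1 - i) (fun i => b + 1 - i) ?_ ?_ ?_ ?_ ?_ <;>
    intro i hi <;> simp only [mem_Icc] at hi ⊢
  · omega
  · omega
  · omega
  · omega
  · rw [ht i (mem_Icc.2 (by omega))]

lemma two_add_log_le {n : ℕ} (hn : 4 ≤ n) : 2 + log n ≤ 5 / 2 * log n := by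
  have h4 : log 4 ≤ log n := log_le_log (by norm_num) (by exact_mod_cast hn)
  have h2 : log 4 = 2 * log 2 := by
    rw [show (4 : ℝ) = 2 ^ 2 by norm_num, log_pow, Nat.cast_ofNat]
  linarith [log_two_gt_d9]

theorem stmt12_general (b : ℕ) (a : ℕ → ℝ)
    (ha : ∀ i : ℕ, a i = Real.sqrt ((i : ℝ) * ((b : ℝ) - i) / b)) :
    (∀ i : ℕ, 1 ≤ i → i ≤ b →
      (a i - a (i-1))^2
        ≤ ((b : ℝ) + 1 - 2*i)^2
            / ((b : ℝ) * (-2*(i : ℝ)^2 + 2*((b : ℝ)+1)*(i : ℝ) - ((b : ℝ)+1)))) ∧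
    (4 ≤ b → ∑ i ∈ Finset.Icc 1 b, (a i - a (i-1))^2
        ≤ (5/2) * Real.log ((((b+1)/2 * (b/2) : ℕ) : ℝ))) := by
  have step (i : ℕ) (hi : 1 ≤ i) (hib : i ≤ b) := by
    have := sq_sqrt_parabola_sub_le (b := b) (Nat.one_le_cast.2 hi) (Nat.cast_le.2 hib)
    rwa [← Nat.cast_pred hi, ← ha, ← ha] at this
  refine ⟨step, fun hb => ?_⟩
  have half (n : ℕ) (hn : 2 * n ≤ b + 1) :
      ∑ i ∈ Icc 1 n, (a i - a (i - 1)) ^ 2 ≤ 1 + log n := by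
    refine (sum_le_sum fun i hi => ?_).trans (sum_Icc_inv_le_one_add_log n)
    obtain ⟨hi1, hin⟩ := mem_Icc.1 hi
    exact (step i hi1 (by omega)).trans (sq_sub_div_parabola_le_inv
      (by exact_mod_cast hi1) (by exact_mod_cast (by omega : 2 * i ≤ b + 1)))
  have reflect (i : ℕ) (hi : i ≤ b) : a (b - i) = a i := by
    rw [ha, ha, Nat.cast_sub hi]
    ring_nf
  rw [sum_Icc_one_eq_add_of_reflect _ b fun i hi => by
    simp only [mem_Icc] at hi
    rw [show b + 1 - i - 1 = b - i by omega, show b + 1 - i = b - (i - 1) by omega,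
      reflect _ (by omega), reflect _ (by omega), ← neg_sub, neg_sq]]
  have hC : (((b + 1) / 2 : ℕ) : ℝ) ≠ 0 := by norm_cast; omega
  have hF : ((b / 2 : ℕ) : ℝ) ≠ 0 := by norm_cast; omega
  calc _ ≤ 2 + log (((b + 1) / 2 * (b / 2) : ℕ) : ℝ) := by
        rw [Nat.cast_mul, log_mul hC hF]
        linarith [half ((b + 1) / 2) (by omega), half (b / 2) (by omega)]
    _ ≤ _ := two_add_log_le (Nat.mul_le_mul (by omega : 2 ≤ (b + 1) / 2) (by omega : 2 ≤ b / 2))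

/-- With `a_i = √(i(b-i)/b)`: the squared consecutive differences satisfy
`(a_i - a_{i-1})² ≤ (b+1-2i)²/(b(-2i² + 2(b+1)i - (b+1)))` for `1 ≤ i ≤ b`, and
consequently `Σ_{i=1}^b (a_i - a_{i-1})² ≤ (5/2)·log(⌈b/2⌉·⌊b/2⌋)` whenever `b ≥ 4`. -/
theorem stmt12 (b : ℕ) (hb : 2 ≤ b) (a : ℕ → ℝ)
    (ha : ∀ i : ℕ, a i = Real.sqrt ((i : ℝ) * ((b : ℝ) - i) / b)) :
    (∀ i : ℕ, 1 ≤ i → i ≤ b →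
      (a i - a (i-1))^2
        ≤ ((b : ℝ) + 1 - 2*i)^2
            / ((b : ℝ) * (-2*(i : ℝ)^2 + 2*((b : ℝ)+1)*(i : ℝ) - ((b : ℝ)+1)))) ∧
    (4 ≤ b → ∑ i ∈ Finset.Icc 1 b, (a i - a (i-1))^2
        ≤ (5/2) * Real.log ((((b+1)/2 * (b/2) : ℕ) : ℝ))) :=
  stmt12_general b a ha
end

section
/- Let X ∈ ℝ^{n×n} with first column X₁ = (1,…,1)', let S₀ ⊆ {2,…,n}, and suppose X_{{1}∪S₀} has full column rank. Write A₁ = I_n - X₁(X₁'X₁)⁻¹X₁' and R = {1,…,n} \ ({1} ∪ S₀). Then for any sign vector z⁰_{S₀} ∈ {−1,1}^{|S₀|}, letting z⁰_{{1}∪S₀} = (0, z⁰_{S₀})', one has ‖X_R' X_{{1}∪S₀}(X_{{1}∪S₀}'X_{{1}∪S₀})⁻¹ z⁰_{{1}∪S₀}‖_∞ = ‖X_R' A₁ X_{S₀}(X_{S₀}'A₁X_{S₀})⁻¹ z⁰_{S₀}‖_∞. -/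
/-!
Both sides are `X_R'` applied to the same vector `v = A₁ X_S (X_S' A₁ X_S)⁻¹ z_S`. This `v` lies
in the column span of `X_T` (the antiprojection `A₁` only subtracts a multiple of `X₁`), and it
solves the normal equations `X_T' v = z_T`: `X_S' v = z_S` by construction, while `X₁' v = 0 = z₁`
because `X₁' A₁ = 0`. Hence `X_T (X_T' X_T)⁻¹ z_T = v`, and the two vectors inside the
sup-norms agree.
-/

open Matrix

namespace Matrix

variable {R m t s k : Type*} [CommRing R]

theorem submatrix_id_mulVec [Fintype t] [Fintype s] [DecidableEq t] (B : Matrix m t R)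
    (f : s → t) (u : s → R) :
    B.submatrix id f *ᵥ u = B *ᵥ ((1 : Matrix t t R).submatrix id f *ᵥ u) := by
  rw [mulVec_mulVec]
  exact congrArg (· *ᵥ u) (mul_submatrix_one (Equiv.refl t) f B).symm

theorem inv_gram_mulVec_transpose_mulVec [Fintype m] [Fintype t] [DecidableEq t]
    (B : Matrix m t R) (hB : IsUnit (Bᵀ * B)) (w : t → R) : (Bᵀ * B)⁻¹ *ᵥ (Bᵀ *ᵥ (B *ᵥ w)) = w := by
  rw [mulVec_mulVec, mulVec_mulVec, Matrix.mul_assoc,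
    nonsing_inv_mul _ ((isUnit_iff_isUnit_det _).mp hB), one_mulVec]

variable [Fintype m] [DecidableEq m] [Fintype k] [DecidableEq k]

noncomputable def antiproj (X1 : Matrix m k R) : Matrix m m R := 1 - X1 * (X1ᵀ * X1)⁻¹ * X1ᵀ

theorem transpose_mul_antiproj {X1 : Matrix m k R} (h : IsUnit (X1ᵀ * X1)) :
    X1ᵀ * antiproj X1 = 0 := by
  rw [antiproj, Matrix.mul_sub, Matrix.mul_one, ← Matrix.mul_assoc, ← Matrix.mul_assoc,
    mul_nonsing_inv _ ((isUnit_iff_isUnit_det _).mp h), Matrix.one_mul, sub_self]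

theorem antiproj_mulVec (X1 : Matrix m k R) (y : m → R) :
    antiproj X1 *ᵥ y = y - X1 *ᵥ ((X1ᵀ * X1)⁻¹ *ᵥ (X1ᵀ *ᵥ y)) := by
  rw [antiproj, sub_mulVec, one_mulVec, mulVec_mulVec, mulVec_mulVec, Matrix.mul_assoc]

theorem mulVec_inv_gram_mulVec_eq_antiproj [Fintype t] [DecidableEq t] [Fintype s] [DecidableEq s]
    (B : Matrix m t R) (f : s → t) (g : k → t) (hfg : Function.Surjective (Sum.elim f g))
    (hB : IsUnit (Bᵀ * B)) (h1 : IsUnit ((B.submatrix id g)ᵀ * B.submatrix id g))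
    (hS : IsUnit ((B.submatrix id f)ᵀ * antiproj (B.submatrix id g) * B.submatrix id f))
    (z : t → R) (hz : z ∘ g = 0) :
    B *ᵥ ((Bᵀ * B)⁻¹ *ᵥ z) = antiproj (B.submatrix id g) *ᵥ (B.submatrix id f *ᵥ
      (((B.submatrix id f)ᵀ * antiproj (B.submatrix id g) * B.submatrix id f)⁻¹ *ᵥ (z ∘ f))) := by
  set XS := B.submatrix id f
  set X1 := B.submatrix id g
  set u := (XSᵀ * antiproj X1 * XS)⁻¹ *ᵥ (z ∘ f)
  set v := antiproj X1 *ᵥ (XS *ᵥ u)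
  have hv_range : ∃ w, v = B *ᵥ w := by
    refine ⟨(1 : Matrix t t R).submatrix id f *ᵥ u -
      (1 : Matrix t t R).submatrix id g *ᵥ ((X1ᵀ * X1)⁻¹ *ᵥ (X1ᵀ *ᵥ (XS *ᵥ u))), ?_⟩
    rw [mulVec_sub, ← submatrix_id_mulVec, ← submatrix_id_mulVec]
    exact antiproj_mulVec _ _
  have hXSv : XSᵀ *ᵥ v = z ∘ f := by
    rw [mulVec_mulVec, mulVec_mulVec, mulVec_mulVec,
      mul_nonsing_inv _ ((isUnit_iff_isUnit_det _).mp hS), one_mulVec]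
  have hX1v : X1ᵀ *ᵥ v = 0 := by
    rw [mulVec_mulVec, transpose_mul_antiproj h1, zero_mulVec]
  have hBv : Bᵀ *ᵥ v = z := hfg.injective_comp_right <| by
    show (Bᵀ *ᵥ v) ∘ Sum.elim f g = z ∘ Sum.elim f g
    rw [Sum.comp_elim, Sum.comp_elim, hz]
    exact congrArg₂ Sum.elim hXSv hX1v
  obtain ⟨w, hw⟩ := hv_range
  rw [← hBv, hw, inv_gram_mulVec_transpose_mulVec B hB]

end Matrix

theorem stmt16_general (n : ℕ) (hn : 1 ≤ n)
    (X : Matrix (Fin n) (Fin n) ℝ)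
    (hX1 : ∀ i, X i ⟨0, hn⟩ = 1)
    (S0 : Finset (Fin n))
    (z : Fin n → ℝ) (hz0 : z ⟨0, hn⟩ = 0) :
    let T : Finset (Fin n) := insert ⟨0, hn⟩ S0
    let R : Finset (Fin n) := Finset.univ \ T
    let XT : Matrix (Fin n) {x // x ∈ T} ℝ := Matrix.of fun i j => X i j.val
    let XS : Matrix (Fin n) {x // x ∈ S0} ℝ := Matrix.of fun i j => X i j.val
    let XR : Matrix (Fin n) {x // x ∈ R} ℝ := Matrix.of fun i j => X i j.val
    let X1 : Matrix (Fin n) (Fin 1) ℝ := Matrix.of fun i _ => X i ⟨0, hn⟩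
    let A1 : Matrix (Fin n) (Fin n) ℝ := 1 - X1 * (X1ᵀ * X1)⁻¹ * X1ᵀ
    IsUnit (XTᵀ * XT) → IsUnit (XSᵀ * A1 * XS) →
    (⨆ r : {x // x ∈ R}, |((XRᵀ * XT * (XTᵀ * XT)⁻¹).mulVec fun j => z j.val) r|)
      = ⨆ r : {x // x ∈ R},
          |((XRᵀ * A1 * XS * (XSᵀ * A1 * XS)⁻¹).mulVec fun j => z j.val) r| := by
  intro T R XT XS XR X1 A1 hT hS
  let f : S0 → T := fun j => ⟨j, Finset.mem_insert_of_mem j.2⟩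
  let g : Fin 1 → T := fun _ => ⟨⟨0, hn⟩, Finset.mem_insert_self _ _⟩
  have hfg : Function.Surjective (Sum.elim f g) := by
    rintro ⟨j, hj⟩
    rcases Finset.mem_insert.mp hj with rfl | hj
    · exact ⟨Sum.inr 0, rfl⟩
    · exact ⟨Sum.inl ⟨j, hj⟩, rfl⟩
  have h1 : IsUnit (X1ᵀ * X1) := by
    rw [isUnit_iff_isUnit_det, det_fin_one, isUnit_iff_ne_zero]
    simpa [mul_apply, X1, hX1] using Nat.one_le_iff_ne_zero.mp hn
  have hfit := XT.mulVec_inv_gram_mulVec_eq_antiproj f g hfg hT h1 hS (fun j => z j)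
    (funext fun _ => hz0)
  have hvec : (XRᵀ * XT * (XTᵀ * XT)⁻¹) *ᵥ (fun j => z j.val) =
      (XRᵀ * A1 * XS * (XSᵀ * A1 * XS)⁻¹) *ᵥ (fun j => z j.val) := by
    simp only [← mulVec_mulVec]
    exact congrArg (XRᵀ *ᵥ ·) hfit
  rw [hvec]

/-- For the Edge Lasso on a tree, the irrepresentable condition can be checked with the
unpenalized first coefficient absorbed: with `X₁` the all-ones first column, `A₁` the
antiprojection onto its span, and `z⁰` a sign vector on `S₀` extended by `0` at index `1`,
`‖X_R' X_{{1}∪S₀}(X_{{1}∪S₀}'X_{{1}∪S₀})⁻¹ z⁰_{{1}∪S₀}‖_∞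
  = ‖X_R' A₁ X_{S₀}(X_{S₀}'A₁X_{S₀})⁻¹ z⁰_{S₀}‖_∞`. -/
theorem stmt16 (n : ℕ) (hn : 1 ≤ n)
    (X : Matrix (Fin n) (Fin n) ℝ)
    (hX1 : ∀ i, X i ⟨0, hn⟩ = 1)
    (S0 : Finset (Fin n)) (hS0 : (⟨0, hn⟩ : Fin n) ∉ S0)
    (z : Fin n → ℝ) (hz0 : z ⟨0, hn⟩ = 0)
    (hzsgn : ∀ i ∈ S0, z i = 1 ∨ z i = -1) :
    let T : Finset (Fin n) := insert ⟨0, hn⟩ S0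
    let R : Finset (Fin n) := Finset.univ \ T
    let XT : Matrix (Fin n) {x // x ∈ T} ℝ := Matrix.of fun i j => X i j.val
    let XS : Matrix (Fin n) {x // x ∈ S0} ℝ := Matrix.of fun i j => X i j.val
    let XR : Matrix (Fin n) {x // x ∈ R} ℝ := Matrix.of fun i j => X i j.val
    let X1 : Matrix (Fin n) (Fin 1) ℝ := Matrix.of fun i _ => X i ⟨0, hn⟩
    let A1 : Matrix (Fin n) (Fin n) ℝ := 1 - X1 * (X1ᵀ * X1)⁻¹ * X1ᵀ
    IsUnit (XTᵀ * XT) → IsUnit (XSᵀ * A1 * XS) →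
    (⨆ r : {x // x ∈ R}, |((XRᵀ * XT * (XTᵀ * XT)⁻¹).mulVec fun j => z j.val) r|)
      = ⨆ r : {x // x ∈ R},
          |((XRᵀ * A1 * XS * (XSᵀ * A1 * XS)⁻¹).mulVec fun j => z j.val) r| :=
  stmt16_general n hn X hX1 S0 z hz0
end

section
/- For b* ≥ 1 and integer x with 3 ≤ x ≤ b*−3, the quantity (√((b*−1)/b*) − √((b*−x+1)(x−1)/b*))² is maximized at x = (b*+2)/2 (when this is an admissible value) with maximum (1/b*)(b*/2 − √(b*−1))², and this maximum is at most b*/4. -/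
/-!
Since `√(q / b) = √q / √b`, the quantity equals `(√(b - 1) - √q)² / b` with
`q = (b - x + 1)(x - 1)`. For `2 ≤ x ≤ b` this product lies between `b - 1` and its value `b² / 4`
at the vertex `x = (b + 2) / 2`, so `√q` is farthest from `√(b - 1)` at the vertex. The final bound
comes from `0 ≤ √(b - 1) ≤ b / 2`, i.e. `(b - 2)² ≥ 0`.
-/

open Real

lemma sq_sub_le_sq_sub_of_le_of_le {α : Type*} [CommRing α] [LinearOrder α] [IsStrictOrderedRing α]
    {a c d : α} (hac : a ≤ c) (hcd : c ≤ d) : (a - c) ^ 2 ≤ (a - d) ^ 2 := by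
  rw [sub_sq_comm a d]
  exact sq_le_sq' (by linarith) (by linarith)

lemma sq_sqrt_div_sub_sqrt_div (p q : ℝ) {b : ℝ} (hb : 0 ≤ b) :
    (√(p / b) - √(q / b)) ^ 2 = (√p - √q) ^ 2 / b := by
  rw [sqrt_div' p hb, sqrt_div' q hb, ← sub_div, div_pow, sq_sqrt hb]

lemma sub_one_le_mul_of_two_le_of_le {b x : ℝ} (h2x : 2 ≤ x) (hxb : x ≤ b) :
    b - 1 ≤ (b - x + 1) * (x - 1) := by
  nlinarith [mul_nonneg (sub_nonneg.2 h2x) (sub_nonneg.2 hxb)]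

lemma mul_le_sq_div_four (b x : ℝ) : (b - x + 1) * (x - 1) ≤ b ^ 2 / 4 := by
  have h := four_mul_le_sq_add (b - x + 1) (x - 1)
  rw [show b - x + 1 + (x - 1) = b by ring] at h
  linarith

lemma sqrt_sub_one_le_half {b : ℝ} (hb : 0 ≤ b) : √(b - 1) ≤ b / 2 :=
  sqrt_le_iff.2 ⟨by positivity, by nlinarith [sq_nonneg (b - 2)]⟩

lemma one_div_mul_sq_half_sub_sqrt_eq {b : ℝ} (hb : 0 ≤ b) :
    1 / b * (b / 2 - √(b - 1)) ^ 2 = (√(b - 1) - √(b ^ 2 / 4)) ^ 2 / b := by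
  rw [show b ^ 2 / 4 = (b / 2) ^ 2 by ring, sqrt_sq (by positivity), sub_sq_comm, one_div_mul_eq_div]

lemma one_div_mul_sq_half_sub_sqrt_le {b : ℝ} (hb : 0 ≤ b) :
    1 / b * (b / 2 - √(b - 1)) ^ 2 ≤ b / 4 := by
  have hsq : (b / 2 - √(b - 1)) ^ 2 ≤ (b / 2) ^ 2 :=
    pow_le_pow_left₀ (sub_nonneg.2 (sqrt_sub_one_le_half hb)) (by linarith [sqrt_nonneg (b - 1)]) 2
  calc 1 / b * (b / 2 - √(b - 1)) ^ 2 ≤ 1 / b * (b / 2) ^ 2 := by gcongr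
    _ = b / 4 := by rcases hb.eq_or_lt with rfl | hb <;> field_simp <;> ring

/-- For `b* ≥ 1` and integer `x` with `3 ≤ x ≤ b*-3`, the quantity
`(√((b*-1)/b*) - √((b*-x+1)(x-1)/b*))²` is at most `(1/b*)(b*/2 - √(b*-1))²`
(with equality at the admissible value `x = (b*+2)/2`), and this maximum is at most
`b*/4`. -/
theorem stmt18 (b : ℝ) (hb : 1 ≤ b) :
    (∀ x : ℤ, 3 ≤ (x : ℝ) → (x : ℝ) ≤ b - 3 →
      (Real.sqrt ((b-1)/b) - Real.sqrt ((b - x + 1) * ((x : ℝ) - 1) / b))^2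
        ≤ (1/b) * (b/2 - Real.sqrt (b-1))^2) ∧
    ((3 ≤ (b+2)/2 → (b+2)/2 ≤ b - 3 →
      (Real.sqrt ((b-1)/b) - Real.sqrt ((b - (b+2)/2 + 1) * ((b+2)/2 - 1) / b))^2
        = (1/b) * (b/2 - Real.sqrt (b-1))^2)) ∧
    (1/b) * (b/2 - Real.sqrt (b-1))^2 ≤ b/4 := by
  have hb0 : 0 ≤ b := by linarith
  refine ⟨fun x h3x hxb => ?_, fun _ _ => ?_, one_div_mul_sq_half_sub_sqrt_le hb0⟩
  · rw [sq_sqrt_div_sub_sqrt_div _ _ hb0, one_div_mul_sq_half_sub_sqrt_eq hb0]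
    refine div_le_div_of_nonneg_right (sq_sub_le_sq_sub_of_le_of_le ?_ ?_) hb0
    · exact sqrt_le_sqrt (sub_one_le_mul_of_two_le_of_le (by linarith) (by linarith))
    · exact sqrt_le_sqrt (mul_le_sq_div_four b x)
  · rw [sq_sqrt_div_sub_sqrt_div _ _ hb0, one_div_mul_sq_half_sub_sqrt_eq hb0]
    ring_nf
end
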